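/- arXiv:1802.07372 — 9 statements merged into one kernel-verified Lean document; each statement's English description precedes it below -/
import Mathlib

section
/- Let M > 0, g ∈ ℝ^d, and H be a real symmetric d×d matrix, and suppose s ∈ ℝ^d is a global minimizer over ℝ^d of the cubic model u ↦ gᵀu + (1/2)uᵀHu + (M/6)‖u‖³. Then H + (M/2)‖s‖ I is positive semidefinite, where I is the d×d identity matrix. -/
open RealInnerProductSpace

set_option maxHeartbeats 1600000 in
lemma cubic_aux {E : Type*} [NormedAddCommGroup E] [InnerProductSpace ℝ E]
    (M : ℝ) (hM : 0 < M) (g : E) (T : E →ₗ[ℝ] E)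
    (hsym : ∀ x y : E, ⟪T x, y⟫ = ⟪x, T y⟫) (s : E)
    (hmin : ∀ u : E,
      ⟪g, s⟫ + (1 / 2) * ⟪s, T s⟫ + M / 6 * ‖s‖ ^ 3
        ≤ ⟪g, u⟫ + (1 / 2) * ⟪u, T u⟫ + M / 6 * ‖u‖ ^ 3) :
    ∀ v : E, 0 ≤ ⟪v, T v⟫ + (M / 2 * ‖s‖) * ‖v‖ ^ 2 := by
  have hcross : ∀ a b : E, ⟪b, T a⟫ = ⟪a, T b⟫ := by
    intro a b
    rw [← hsym b a, real_inner_comm]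
  have hTexp : ∀ (a b : E) (t : ℝ),
      ⟪a + t • b, T (a + t • b)⟫ = ⟪a, T a⟫ + 2 * t * ⟪a, T b⟫ + t ^ 2 * ⟪b, T b⟫ := by
    intro a b t
    simp only [map_add, map_smul, inner_add_left, inner_add_right, real_inner_smul_left,
      real_inner_smul_right, hcross b a]
    ring
  have hNexp : ∀ (a b : E) (t : ℝ),
      ‖a + t • b‖ ^ 2 = ‖a‖ ^ 2 + 2 * t * ⟪a, b⟫ + t ^ 2 * ‖b‖ ^ 2 := by
    intro a b t
    rw [norm_add_sq_real, real_inner_smul_right, norm_smul]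
    simp [mul_pow]
    ring
  rcases eq_or_ne s 0 with hs | hs
  · -- case s = 0
    subst hs
    intro v
    simp only [norm_zero, mul_zero, zero_mul, add_zero]
    have hmin' : ∀ u : E, 0 ≤ ⟪g, u⟫ + (1 / 2) * ⟪u, T u⟫ + M / 6 * ‖u‖ ^ 3 := by
      intro u
      simpa using hmin u
    have key : ∀ t : ℝ, 0 < t → 0 ≤ ⟪v, T v⟫ + M / 3 * t * ‖v‖ ^ 3 := by
      intro t ht
      have h1 := hmin' (t • v)
      have h2 := hmin' ((-t) • v)
      simp only [real_inner_smul_right, map_smul, real_inner_smul_left, norm_smul] at h1 h2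
      rw [norm_neg] at h2
      rw [Real.norm_eq_abs, abs_of_pos ht] at h1 h2
      have hsum : 0 ≤ t ^ 2 * ⟪v, T v⟫ + M / 3 * (t * ‖v‖) ^ 3 := by nlinarith [h1, h2]
      have ht2 : 0 < t ^ 2 := by positivity
      nlinarith [hsum, ht2]
    refine le_of_forall_pos_le_add ?_
    intro ε hε
    have hc : 0 ≤ M / 3 * ‖v‖ ^ 3 := by positivity
    set c := M / 3 * ‖v‖ ^ 3 with hcdef
    have ht : (0:ℝ) < ε / (c + 1) := by positivity
    have hk := key (ε / (c + 1)) ht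
    have hle : M / 3 * (ε / (c + 1)) * ‖v‖ ^ 3 ≤ ε := by
      have h4 : c / (c + 1) ≤ 1 := (div_le_one (by positivity)).2 (by linarith)
      calc M / 3 * (ε / (c + 1)) * ‖v‖ ^ 3 = ε * (c / (c + 1)) := by rw [hcdef]; ring
        _ ≤ ε * 1 := mul_le_mul_of_nonneg_left h4 hε.le
        _ = ε := mul_one ε
    linarith [hk, hle]
  · -- case s ≠ 0
    have hns : (0:ℝ) < ‖s‖ := norm_pos_iff.mpr hs
    have hns2 : (0:ℝ) < ‖s‖ ^ 2 := by positivity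
    -- first-order condition
    have hFOC : ∀ v : E, ⟪g, v⟫ + ⟪s, T v⟫ + M / 2 * ‖s‖ * ⟪s, v⟫ = 0 := by
      intro v
      set φ : ℝ → ℝ := fun t =>
        (⟪g, s⟫ + t * ⟪g, v⟫) + (1 / 2) * (⟪s, T s⟫ + 2 * t * ⟪s, T v⟫ + t ^ 2 * ⟪v, T v⟫)
          + M / 6 * Real.sqrt (‖s‖ ^ 2 + 2 * ⟪s, v⟫ * t + ‖v‖ ^ 2 * t ^ 2) ^ 3 with hφdef
      have hφ : ∀ t : ℝ, φ t = ⟪g, s + t • v⟫ + (1 / 2) * ⟪s + t • v, T (s + t • v)⟫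
          + M / 6 * ‖s + t • v‖ ^ 3 := by
        intro t
        rw [hφdef]
        simp only
        rw [inner_add_right, real_inner_smul_right, hTexp]
        have hnn : ‖s‖ ^ 2 + 2 * ⟪s, v⟫ * t + ‖v‖ ^ 2 * t ^ 2 = ‖s + t • v‖ ^ 2 := by
          rw [hNexp]; ring
        rw [hnn, Real.sqrt_sq (norm_nonneg _)]
      have hloc : IsLocalMin φ 0 := by
        apply Filter.Eventually.of_forall
        intro t
        rw [hφ t, hφ 0]
        simpa using hmin (s + t • v)
      have hp : HasDerivAt (fun t : ℝ => ‖s‖ ^ 2 + 2 * ⟪s, v⟫ * t + ‖v‖ ^ 2 * t ^ 2)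
          (2 * ⟪s, v⟫) 0 := by
        have h1 := ((hasDerivAt_id (0:ℝ)).const_mul (2 * ⟪s, v⟫)).const_add (‖s‖ ^ 2)
        have h2 := (hasDerivAt_pow 2 (0:ℝ)).const_mul (‖v‖ ^ 2)
        simpa using h1.fun_add h2
      have hval : (fun t : ℝ => ‖s‖ ^ 2 + 2 * ⟪s, v⟫ * t + ‖v‖ ^ 2 * t ^ 2) 0 = ‖s‖ ^ 2 := by
        norm_num
      have hsq : HasDerivAt (fun t : ℝ => Real.sqrt (‖s‖ ^ 2 + 2 * ⟪s, v⟫ * t + ‖v‖ ^ 2 * t ^ 2))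
          (1 / (2 * Real.sqrt (‖s‖ ^ 2)) * (2 * ⟪s, v⟫)) 0 := by
        have h2 : HasDerivAt Real.sqrt (1 / (2 * Real.sqrt (‖s‖ ^ 2)))
            ((fun t : ℝ => ‖s‖ ^ 2 + 2 * ⟪s, v⟫ * t + ‖v‖ ^ 2 * t ^ 2) 0) := by
          rw [hval]; exact Real.hasDerivAt_sqrt (ne_of_gt hns2)
        exact h2.comp 0 hp
      have hcube := (hsq.pow 3).const_mul (M / 6)
      have hpoly : HasDerivAt (fun t : ℝ =>
          (⟪g, s⟫ + t * ⟪g, v⟫) + (1 / 2) * (⟪s, T s⟫ + 2 * t * ⟪s, T v⟫ + t ^ 2 * ⟪v, T v⟫))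
          (⟪g, v⟫ + ⟪s, T v⟫) 0 := by
        have h1 := ((hasDerivAt_id (0:ℝ)).const_mul ⟪g, v⟫).const_add ⟪g, s⟫
        have h2a := ((hasDerivAt_id (0:ℝ)).const_mul (2 * ⟪s, T v⟫)).const_add ⟪s, T s⟫
        have h2b := (hasDerivAt_pow 2 (0:ℝ)).const_mul ⟪v, T v⟫
        have h2 := (h2a.fun_add h2b).const_mul (1/2 : ℝ)
        have h3 := h1.fun_add h2
        convert! h3 using 1
        · funext t; simp only [id_eq]; ring
        · push_cast; ring
      have hφ' : HasDerivAt φ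
          (⟪g, v⟫ + ⟪s, T v⟫ + M / 6 * (3 * ‖s‖ ^ 2
            * (1 / (2 * ‖s‖) * (2 * ⟪s, v⟫)))) 0 := by
        have h := hpoly.fun_add hcube
        convert! h using 1
        · push_cast
          norm_num [Real.sqrt_sq (norm_nonneg s)]
      have hzero := hloc.hasDerivAt_eq_zero hφ'
      have heq : M / 6 * (3 * ‖s‖ ^ 2 * (1 / (2 * ‖s‖) * (2 * ⟪s, v⟫)))
          = M / 2 * ‖s‖ * ⟪s, v⟫ := by
        field_simp
        ring
      rw [heq] at hzero
      exact hzero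
    -- step 2: for vectors not perpendicular to s
    have hQ1 : ∀ w : E, ⟪s, w⟫ ≠ 0 → 0 ≤ ⟪w, T w⟫ + (M / 2 * ‖s‖) * ‖w‖ ^ 2 := by
      intro w hsw
      have hw : w ≠ 0 := by
        intro h; apply hsw; rw [h, inner_zero_right]
      have hnw : (0:ℝ) < ‖w‖ ^ 2 := by
        have := norm_pos_iff.mpr hw
        positivity
      set t : ℝ := -2 * ⟪s, w⟫ / ‖w‖ ^ 2 with htdef
      have htne : t ≠ 0 := by
        rw [htdef]
        exact div_ne_zero (by simpa using hsw) (ne_of_gt hnw)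
      have htw : t * ‖w‖ ^ 2 = -2 * ⟪s, w⟫ := by
        rw [htdef]; field_simp
      have hnorm : ‖s + t • w‖ ^ 2 = ‖s‖ ^ 2 := by
        rw [hNexp]
        linear_combination t * htw
      have hnorm' : ‖s + t • w‖ = ‖s‖ := by
        have h5 := congrArg Real.sqrt hnorm
        rwa [Real.sqrt_sq (norm_nonneg _), Real.sqrt_sq (norm_nonneg _)] at h5
      have h := hmin (s + t • w)
      rw [inner_add_right, real_inner_smul_right, hTexp, hnorm'] at h
      have hfoc := hFOC w
      have hg : ⟪g, w⟫ + ⟪s, T w⟫ = -(M / 2 * ‖s‖ * ⟪s, w⟫) := by linarith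
      have hgt : t * (⟪g, w⟫ + ⟪s, T w⟫) = t * -(M / 2 * ‖s‖ * ⟪s, w⟫) := by rw [hg]
      have h2 : 0 ≤ t * -(M / 2 * ‖s‖ * ⟪s, w⟫) + (1/2) * t ^ 2 * ⟪w, T w⟫ := by
        ring_nf at hgt ⊢
        ring_nf at h
        nlinarith [h, hgt]
      have hts : t * ⟪s, w⟫ = -(t ^ 2 * ‖w‖ ^ 2) / 2 := by
        linear_combination (t / 2) * htw
      have h4 : 0 ≤ (t ^ 2 / 2) * (⟪w, T w⟫ + M / 2 * ‖s‖ * ‖w‖ ^ 2) := by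
        have h6 : t * -(M / 2 * ‖s‖ * ⟪s, w⟫) = (t ^ 2 / 2) * (M / 2 * ‖s‖ * ‖w‖ ^ 2) := by
          linear_combination (-(M / 2 * ‖s‖)) * hts
        linarith [h2, h6]
      have ht2 : 0 < t ^ 2 / 2 := by positivity
      nlinarith [h4, ht2]
    -- general v
    intro v
    rcases eq_or_ne ⟪s, v⟫ 0 with hsv | hsv
    · -- perpendicular case
      have hQs : 0 ≤ ⟪s, T s⟫ + (M / 2 * ‖s‖) * ‖s‖ ^ 2 := by
        apply hQ1
        rw [real_inner_self_eq_norm_sq]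
        exact ne_of_gt hns2
      have hδ : ∀ δ : ℝ, 0 < δ →
          0 ≤ ⟪v, T v⟫ + (M / 2 * ‖s‖) * ‖v‖ ^ 2 + δ ^ 2 * (⟪s, T s⟫ + (M / 2 * ‖s‖) * ‖s‖ ^ 2) := by
        intro δ hδpos
        have hne : ∀ ε : ℝ, ε ≠ 0 → ⟪s, v + ε • s⟫ ≠ 0 := by
          intro ε hε
          rw [inner_add_right, real_inner_smul_right, hsv, real_inner_self_eq_norm_sq, zero_add]
          exact mul_ne_zero hε (ne_of_gt hns2)
        have hvs : ⟪v, s⟫ = 0 := by rw [real_inner_comm]; exact hsv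
        have hexp : ∀ ε : ℝ, ⟪v + ε • s, T (v + ε • s)⟫ + (M / 2 * ‖s‖) * ‖v + ε • s‖ ^ 2
            = (⟪v, T v⟫ + (M / 2 * ‖s‖) * ‖v‖ ^ 2) + 2 * ε * ⟪v, T s⟫
              + ε ^ 2 * (⟪s, T s⟫ + (M / 2 * ‖s‖) * ‖s‖ ^ 2) := by
          intro ε
          rw [hTexp, hNexp, hvs]
          ring
        have h1 := hQ1 (v + δ • s) (hne δ (ne_of_gt hδpos))
        have h2 := hQ1 (v + (-δ) • s) (hne (-δ) (by simpa using ne_of_gt hδpos))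
        rw [hexp δ] at h1
        rw [hexp (-δ)] at h2
        linarith [h1, h2]
      refine le_of_forall_pos_le_add ?_
      intro ε hε
      set Qs := ⟪s, T s⟫ + (M / 2 * ‖s‖) * ‖s‖ ^ 2 with hQsdef
      have hQs1 : (0:ℝ) < Qs + 1 := by linarith [hQs]
      have hquot : (0:ℝ) < ε / (Qs + 1) := div_pos hε hQs1
      have hδpos : (0:ℝ) < Real.sqrt (ε / (Qs + 1)) := Real.sqrt_pos.mpr hquot
      have h := hδ _ hδpos
      rw [Real.sq_sqrt hquot.le] at h
      have hle : ε / (Qs + 1) * Qs ≤ ε := by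
        have h4 : Qs / (Qs + 1) ≤ 1 := (div_le_one hQs1).2 (by linarith)
        calc ε / (Qs + 1) * Qs = ε * (Qs / (Qs + 1)) := by ring
          _ ≤ ε * 1 := mul_le_mul_of_nonneg_left h4 hε.le
          _ = ε := mul_one ε
      linarith [h, hle]
    · exact hQ1 v hsv

/-- second-order optimality of the cubic-regularized model:
if `s` globally minimizes `u ↦ gᵀu + (1/2)uᵀHu + (M/6)‖u‖³` then
`H + (M/2)‖s‖ I` is positive semidefinite. -/
theorem stmt3 (d : ℕ) (M : ℝ) (hM : 0 < M) (g : EuclideanSpace ℝ (Fin d))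
    (H : Matrix (Fin d) (Fin d) ℝ) (hH : H.IsSymm)
    (s : EuclideanSpace ℝ (Fin d))
    (hmin : ∀ u : EuclideanSpace ℝ (Fin d),
      ⟪g, s⟫ + (1 / 2) * ⟪s, Matrix.toEuclideanLin H s⟫ + M / 6 * ‖s‖ ^ 3
        ≤ ⟪g, u⟫ + (1 / 2) * ⟪u, Matrix.toEuclideanLin H u⟫ + M / 6 * ‖u‖ ^ 3) :
    (H + (M / 2 * ‖s‖) • (1 : Matrix (Fin d) (Fin d) ℝ)).PosSemidef := by
  have hHerm : H.IsHermitian := by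
    rwa [Matrix.IsHermitian, Matrix.conjTranspose_eq_transpose_of_trivial]
  have hsym : ∀ x y : EuclideanSpace ℝ (Fin d),
      ⟪Matrix.toEuclideanLin H x, y⟫ = ⟪x, Matrix.toEuclideanLin H y⟫ :=
    fun x y => Matrix.isHermitian_iff_isSymmetric.mp hHerm x y
  have key := cubic_aux M hM g (Matrix.toEuclideanLin H) hsym s hmin
  rw [Matrix.posSemidef_iff_dotProduct_mulVec]
  constructor
  · show (H + (M / 2 * ‖s‖) • (1 : Matrix (Fin d) (Fin d) ℝ)).IsHermitian
    rw [Matrix.IsHermitian, Matrix.conjTranspose_eq_transpose_of_trivial,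
      Matrix.transpose_add, Matrix.transpose_smul, Matrix.transpose_one, hH]
  · intro x
    have hv := key ((WithLp.equiv 2 (Fin d → ℝ)).symm x)
    have h1 : ⟪((WithLp.equiv 2 (Fin d → ℝ)).symm x),
        Matrix.toEuclideanLin H ((WithLp.equiv 2 (Fin d → ℝ)).symm x)⟫ = dotProduct x (H.mulVec x) := by
      rw [WithLp.equiv_symm_apply, Matrix.toEuclideanLin_apply_piLp_toLp]
      simp [PiLp.inner_apply, WithLp.equiv_symm_apply, dotProduct, mul_comm]
    have h2 : ‖(WithLp.equiv 2 (Fin d → ℝ)).symm x‖ ^ 2 = dotProduct x x := by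
      rw [← real_inner_self_eq_norm_sq]
      simp [PiLp.inner_apply, WithLp.equiv_symm_apply, dotProduct, EuclideanSpace.norm_sq_eq, ← sq]
    rw [h1, h2] at hv
    simpa [Matrix.add_mulVec, Matrix.smul_mulVec, Matrix.one_mulVec,
      dotProduct_add, dotProduct_smul, smul_eq_mul, star_trivial] using hv
end

section
/- Let M > 0, g ∈ ℝ^d, and H be a real symmetric d×d matrix, and suppose s ∈ ℝ^d is a global minimizer over ℝ^d of the cubic model u ↦ gᵀu + (1/2)uᵀHu + (M/6)‖u‖³. Then gᵀs + (1/2)sᵀHs + (M/6)‖s‖³ ≤ −(M/12)‖s‖³. -/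
/-!
Restricting the model to the ray `t ↦ t • s` gives the cubic `φ t = a t + (b/2) t² + c t³`
with `a = ⟪g, s⟫`, `b = ⟪s, T s⟫`, `c = (M/6)‖s‖³`, minimized over `t > 0` at `t = 1`; hence
`φ' 1 = a + b + 3c = 0`. Comparing with `u = -s` gives `a ≤ 0`, and then
`φ 1 = (a + b + 3c)/2 + a/2 - c/2 ≤ -c/2`.
-/

open RealInnerProductSpace

lemma add_add_three_mul_eq_zero_of_forall_pos_le {a b c : ℝ}
    (h : ∀ t, 0 < t → a + b / 2 + c ≤ a * t + b / 2 * t ^ 2 + c * t ^ 3) :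
    a + b + 3 * c = 0 := by
  have hmin : IsLocalMin (fun t : ℝ => a * t + b / 2 * t ^ 2 + c * t ^ 3) 1 :=
    Filter.mem_of_superset (Ioi_mem_nhds one_pos) fun t ht => by simpa using h t ht
  have hderiv : HasDerivAt (fun t : ℝ => a * t + b / 2 * t ^ 2 + c * t ^ 3)
      (a + b + 3 * c) 1 :=
    ((((hasDerivAt_id' 1).const_mul a).add ((hasDerivAt_pow 2 1).const_mul (b / 2))).add
      ((hasDerivAt_pow 3 1).const_mul c)).congr_deriv (by norm_num; ring)
  exact hmin.hasDerivAt_eq_zero hderiv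

section CubicModel

variable {E : Type*} [NormedAddCommGroup E] [InnerProductSpace ℝ E]

noncomputable def cubicModel (g : E) (T : E →ₗ[ℝ] E) (M : ℝ) (u : E) : ℝ :=
  ⟪g, u⟫ + (1 / 2) * ⟪u, T u⟫ + M / 6 * ‖u‖ ^ 3

variable (g : E) (T : E →ₗ[ℝ] E) (M : ℝ) (s : E)

lemma cubicModel_smul_of_nonneg {t : ℝ} (ht : 0 ≤ t) :
    cubicModel g T M (t • s) =
      ⟪g, s⟫ * t + ⟪s, T s⟫ / 2 * t ^ 2 + M / 6 * ‖s‖ ^ 3 * t ^ 3 := by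
  simp only [cubicModel, map_smul, real_inner_smul_left, real_inner_smul_right, norm_smul,
    Real.norm_of_nonneg ht]
  ring

lemma cubicModel_neg :
    cubicModel g T M (-s) = -⟪g, s⟫ + (1 / 2) * ⟪s, T s⟫ + M / 6 * ‖s‖ ^ 3 := by
  simp [cubicModel]

theorem cubicModel_le_of_forall_le (hmin : ∀ u, cubicModel g T M s ≤ cubicModel g T M u) :
    cubicModel g T M s ≤ -(M / 12) * ‖s‖ ^ 3 := by
  have hstat : ⟪g, s⟫ + ⟪s, T s⟫ + 3 * (M / 6 * ‖s‖ ^ 3) = 0 :=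
    add_add_three_mul_eq_zero_of_forall_pos_le fun t ht => by
      have := hmin (t • s)
      rw [cubicModel_smul_of_nonneg g T M s ht.le] at this
      simp only [cubicModel] at this
      linarith
  have hneg : ⟪g, s⟫ ≤ 0 := by
    have := hmin (-s)
    rw [cubicModel_neg] at this
    simp only [cubicModel] at this
    linarith
  simp only [cubicModel]
  linarith

end CubicModel

theorem stmt4_general (d : ℕ) (M : ℝ) (g : EuclideanSpace ℝ (Fin d))
    (H : Matrix (Fin d) (Fin d) ℝ)
    (s : EuclideanSpace ℝ (Fin d))
    (hmin : ∀ u : EuclideanSpace ℝ (Fin d),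
      ⟪g, s⟫ + (1 / 2) * ⟪s, Matrix.toEuclideanLin H s⟫ + M / 6 * ‖s‖ ^ 3
        ≤ ⟪g, u⟫ + (1 / 2) * ⟪u, Matrix.toEuclideanLin H u⟫ + M / 6 * ‖u‖ ^ 3) :
    ⟪g, s⟫ + (1 / 2) * ⟪s, Matrix.toEuclideanLin H s⟫ + M / 6 * ‖s‖ ^ 3
      ≤ -(M / 12) * ‖s‖ ^ 3 :=
  cubicModel_le_of_forall_le g (Matrix.toEuclideanLin H) M s hmin

/-- if `s` globally minimizes the cubic model
`u ↦ gᵀu + (1/2)uᵀHu + (M/6)‖u‖³`, then its model value satisfies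
`gᵀs + (1/2)sᵀHs + (M/6)‖s‖³ ≤ −(M/12)‖s‖³`. -/
theorem stmt4 (d : ℕ) (M : ℝ) (hM : 0 < M) (g : EuclideanSpace ℝ (Fin d))
    (H : Matrix (Fin d) (Fin d) ℝ) (hH : H.IsSymm)
    (s : EuclideanSpace ℝ (Fin d))
    (hmin : ∀ u : EuclideanSpace ℝ (Fin d),
      ⟪g, s⟫ + (1 / 2) * ⟪s, Matrix.toEuclideanLin H s⟫ + M / 6 * ‖s‖ ^ 3
        ≤ ⟪g, u⟫ + (1 / 2) * ⟪u, Matrix.toEuclideanLin H u⟫ + M / 6 * ‖u‖ ^ 3) :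
    ⟪g, s⟫ + (1 / 2) * ⟪s, Matrix.toEuclideanLin H s⟫ + M / 6 * ‖s‖ ^ 3
      ≤ -(M / 12) * ‖s‖ ^ 3 :=
  stmt4_general d M g H s hmin
end

section
/- Let f : ℝ^d → ℝ be twice continuously differentiable with L₂-Lipschitz Hessian (in operator norm). Fix x ∈ ℝ^d, a previous step s_prev ∈ ℝ^d, ε₁ > 0, M > 0, α ≥ 0, β ≥ 0, a vector g ∈ ℝ^d and a symmetric d×d matrix H satisfying the inexact conditions ‖H − ∇²f(x)‖ ≤ α·max{‖s_prev‖, ε₁} and ‖g − ∇f(x)‖ ≤ β·max{‖s_prev‖², ε₁²}. Let s be a global minimizer over ℝ^d of u ↦ gᵀu + (1/2)uᵀHu + (M/6)‖u‖³. Then f(x + s) − f(x) ≤ −((3M − 2L₂)/12 − 2β − α)‖s‖³ + (β + α/2)‖s_prev‖³ + (β + α/2)ε₁³. -/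
open RealInnerProductSpace

/-- x²y ≤ x³ + y³ for nonneg x, y. -/
lemma aux_cube {x y : ℝ} (hx : 0 ≤ x) (hy : 0 ≤ y) : x^2 * y ≤ x^3 + y^3 := by
  nlinarith [mul_nonneg (add_nonneg hx hy) (sq_nonneg (x - y)), mul_nonneg hx (sq_nonneg y),
    mul_nonneg hy (sq_nonneg x)]

/-- Second-order Taylor bound from a linear bound on the second derivative. -/
lemma aux_taylor {φ φ' φ'' : ℝ → ℝ} {K : ℝ}
    (h1 : ∀ t, HasDerivAt φ (φ' t) t)
    (h2 : ∀ t, HasDerivAt φ' (φ'' t) t)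
    (hK : ∀ t ∈ Set.Icc (0:ℝ) 1, φ'' t ≤ φ'' 0 + K * t) :
    φ 1 ≤ φ 0 + φ' 0 + φ'' 0 / 2 + K / 6 := by
  set ξ : ℝ → ℝ := fun t => φ' t - φ' 0 - φ'' 0 * t - K * t^2 / 2 with hξdef
  have hξd : ∀ t, HasDerivAt ξ (φ'' t - φ'' 0 - K * t) t := by
    intro t
    have A1 : HasDerivAt (fun u : ℝ => φ'' 0 * u) (φ'' 0) t := by
      simpa using (hasDerivAt_id t).const_mul (φ'' 0)
    have A2 : HasDerivAt (fun u : ℝ => K * u^2 / 2) (K * t) t := by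
      have := ((hasDerivAt_pow 2 t).const_mul K).div_const 2
      exact this.congr_deriv (by push_cast; ring)
    exact (((h2 t).sub_const (φ' 0)).sub A1).sub A2
  have hξanti : AntitoneOn ξ (Set.Icc 0 1) := by
    apply antitoneOn_of_deriv_nonpos (convex_Icc 0 1)
    · exact fun t _ => (hξd t).continuousAt.continuousWithinAt
    · exact fun t _ => (hξd t).differentiableAt.differentiableWithinAt
    · intro t ht
      rw [interior_Icc] at ht
      rw [(hξd t).deriv]
      have := hK t ⟨le_of_lt ht.1, le_of_lt ht.2⟩
      linarith
  have hξ0 : ξ 0 = 0 := by simp [hξdef]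
  have hξle : ∀ t ∈ Set.Icc (0:ℝ) 1, ξ t ≤ 0 := by
    intro t ht
    have := hξanti (Set.left_mem_Icc.mpr zero_le_one) ht ht.1
    simpa [hξ0] using this
  set χ : ℝ → ℝ := fun t => φ t - φ 0 - φ' 0 * t - φ'' 0 * t^2 / 2 - K * t^3 / 6 with hχdef
  have hχd : ∀ t, HasDerivAt χ (ξ t) t := by
    intro t
    have A1 : HasDerivAt (fun u : ℝ => φ' 0 * u) (φ' 0) t := by
      simpa using (hasDerivAt_id t).const_mul (φ' 0)
    have A2 : HasDerivAt (fun u : ℝ => φ'' 0 * u^2 / 2) (φ'' 0 * t) t := by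
      have := ((hasDerivAt_pow 2 t).const_mul (φ'' 0)).div_const 2
      exact this.congr_deriv (by push_cast; ring)
    have A3 : HasDerivAt (fun u : ℝ => K * u^3 / 6) (K * t^2 / 2) t := by
      have := ((hasDerivAt_pow 3 t).const_mul K).div_const 6
      exact this.congr_deriv (by push_cast; ring)
    have := ((((h1 t).sub_const (φ 0)).sub A1).sub A2).sub A3
    exact this
  have hχanti : AntitoneOn χ (Set.Icc 0 1) := by
    apply antitoneOn_of_deriv_nonpos (convex_Icc 0 1)
    · exact fun t _ => (hχd t).continuousAt.continuousWithinAt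
    · exact fun t _ => (hχd t).differentiableAt.differentiableWithinAt
    · intro t ht
      rw [interior_Icc] at ht
      rw [(hχd t).deriv]
      exact hξle t ⟨le_of_lt ht.1, le_of_lt ht.2⟩
  have := hχanti (Set.left_mem_Icc.mpr zero_le_one) (Set.right_mem_Icc.mpr zero_le_one) zero_le_one
  simp only [hχdef] at this
  norm_num at this
  linarith

set_option maxHeartbeats 2000000 in
/-- descent lemma for one inexact cubic-regularization step.
Under the inexact gradient/Hessian conditions, a global minimizer `s` of the inexact
cubic model satisfies
`f(x + s) − f(x) ≤ −((3M − 2L₂)/12 − 2β − α)‖s‖³ + (β + α/2)‖s_prev‖³ + (β + α/2)ε₁³`. -/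
theorem stmt5 (d : ℕ) (f : EuclideanSpace ℝ (Fin d) → ℝ) (L₂ : ℝ)
    (hf : ContDiff ℝ 2 f)
    (hLip : ∀ x y : EuclideanSpace ℝ (Fin d),
      ‖fderiv ℝ (gradient f) x - fderiv ℝ (gradient f) y‖ ≤ L₂ * ‖x - y‖)
    (x s_prev : EuclideanSpace ℝ (Fin d)) (ε₁ M α β : ℝ)
    (hε₁ : 0 < ε₁) (hM : 0 < M) (hα : 0 ≤ α) (hβ : 0 ≤ β)
    (g : EuclideanSpace ℝ (Fin d)) (H : Matrix (Fin d) (Fin d) ℝ) (hH : H.IsSymm)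
    (hHerr : ‖Matrix.toEuclideanCLM (𝕜 := ℝ) H - fderiv ℝ (gradient f) x‖
      ≤ α * max ‖s_prev‖ ε₁)
    (hgerr : ‖g - gradient f x‖ ≤ β * max (‖s_prev‖ ^ 2) (ε₁ ^ 2))
    (s : EuclideanSpace ℝ (Fin d))
    (hmin : ∀ u : EuclideanSpace ℝ (Fin d),
      ⟪g, s⟫ + (1 / 2) * ⟪s, Matrix.toEuclideanLin H s⟫ + M / 6 * ‖s‖ ^ 3
        ≤ ⟪g, u⟫ + (1 / 2) * ⟪u, Matrix.toEuclideanLin H u⟫ + M / 6 * ‖u‖ ^ 3) :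
    f (x + s) - f x ≤ -((3 * M - 2 * L₂) / 12 - 2 * β - α) * ‖s‖ ^ 3
      + (β + α / 2) * ‖s_prev‖ ^ 3 + (β + α / 2) * ε₁ ^ 3 := by
  obtain ⟨A, hA⟩ : ∃ A : EuclideanSpace ℝ (Fin d) →
      (EuclideanSpace ℝ (Fin d) →L[ℝ] EuclideanSpace ℝ (Fin d)),
      A = fderiv ℝ (gradient f) := ⟨_, rfl⟩
  rw [← hA] at hLip hHerr
  set a : ℝ := ⟪g, s⟫ with ha
  set b : ℝ := ⟪s, Matrix.toEuclideanLin H s⟫ with hb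
  -- basic differentiability
  have hfd : Differentiable ℝ f := hf.differentiable (by norm_num)
  have hgcd : ContDiff ℝ 1 (gradient f) := by
    have h2 : ContDiff ℝ 1 (fderiv ℝ f) := hf.fderiv_right (by norm_num)
    have : gradient f = fun y => (InnerProductSpace.toDual ℝ (EuclideanSpace ℝ (Fin d))).symm (fderiv ℝ f y) := rfl
    rw [this]
    exact (InnerProductSpace.toDual ℝ (EuclideanSpace ℝ (Fin d))).symm.contDiff.comp h2
  have hgdiff : Differentiable ℝ (gradient f) := hgcd.differentiable one_ne_zero
  -- line and derivatives
  have hc : ∀ t : ℝ, HasDerivAt (fun u : ℝ => x + u • s) s t := by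
    intro t
    have : HasDerivAt (fun u : ℝ => u • s) s t := by
      simpa using (hasDerivAt_id t).smul_const s
    simpa using this.const_add x
  have h1 : ∀ t : ℝ, HasDerivAt (fun u : ℝ => f (x + u • s))
      ⟪gradient f (x + t • s), s⟫ t := by
    intro t
    have hfx := (hfd (x + t • s)).hasFDerivAt
    have := hfx.comp_hasDerivAt t (hc t)
    rwa [show (fderiv ℝ f (x + t • s)) s = ⟪gradient f (x + t • s), s⟫ from
      (InnerProductSpace.toDual_symm_apply).symm] at this
  have h2 : ∀ t : ℝ, HasDerivAt (fun u : ℝ => ⟪gradient f (x + u • s), s⟫)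
      ⟪s, A (x + t • s) s⟫ t := by
    intro t
    have hg1 : HasDerivAt (fun u : ℝ => gradient f (x + u • s)) (A (x + t • s) s) t := by
      rw [hA]
      exact (hgdiff (x + t • s)).hasFDerivAt.comp_hasDerivAt t (hc t)
    have := (innerSL ℝ s).hasFDerivAt.comp_hasDerivAt t hg1
    simp only [Function.comp_def, innerSL_apply_apply] at this
    convert this using 2
    exacts [rfl, rfl, real_inner_comm (F := EuclideanSpace ℝ (Fin d)) _ _]
  -- Taylor bound
  have hTaylor : f (x + s) ≤ f x + ⟪gradient f x, s⟫ + ⟪s, A x s⟫ / 2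
      + L₂ * ‖s‖ ^ 3 / 6 := by
    have hK : ∀ t ∈ Set.Icc (0:ℝ) 1,
        ⟪s, A (x + t • s) s⟫ ≤ ⟪s, A (x + (0:ℝ) • s) s⟫ + (L₂ * ‖s‖ ^ 3) * t := by
      intro t ht
      have hnorm : ‖A (x + t • s) - A x‖ ≤ L₂ * (t * ‖s‖) := by
        have := hLip (x + t • s) x
        rwa [show x + t • s - x = t • s by abel, norm_smul, Real.norm_eq_abs,
          abs_of_nonneg ht.1] at this
      have hsub : ⟪s, A (x + t • s) s⟫ - ⟪s, A x s⟫ = ⟪s, (A (x + t • s) - A x) s⟫ := by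
        rw [ContinuousLinearMap.sub_apply, inner_sub_right]
      have hcs : ⟪s, (A (x + t • s) - A x) s⟫ ≤ ‖s‖ * ‖(A (x + t • s) - A x) s‖ :=
        real_inner_le_norm _ _
      have hop : ‖(A (x + t • s) - A x) s‖ ≤ ‖A (x + t • s) - A x‖ * ‖s‖ :=
        (A (x + t • s) - A x).le_opNorm s
      have hs0 : (0:ℝ) ≤ ‖s‖ := norm_nonneg s
      have : ⟪s, A (x + t • s) s⟫ - ⟪s, A x s⟫ ≤ L₂ * ‖s‖ ^ 3 * t := by
        rw [hsub]
        calc ⟪s, (A (x + t • s) - A x) s⟫ ≤ ‖s‖ * (‖A (x + t • s) - A x‖ * ‖s‖) :=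
              le_trans hcs (by
                exact mul_le_mul_of_nonneg_left hop hs0)
          _ ≤ ‖s‖ * (L₂ * (t * ‖s‖) * ‖s‖) := by
              apply mul_le_mul_of_nonneg_left _ hs0
              exact mul_le_mul_of_nonneg_right hnorm hs0
          _ = L₂ * ‖s‖ ^ 3 * t := by ring
      simp only [zero_smul, add_zero]
      linarith
    have := aux_taylor h1 h2 hK
    simpa using this
  -- minimizer: a ≤ 0
  have haneg : a ≤ 0 := by
    have h := hmin (-s)
    simp only [inner_neg_right, map_neg, inner_neg_left, inner_neg_right, neg_neg,
      norm_neg] at h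
    rw [← hb] at h
    linarith
  -- first-order condition along s
  have hfoc : a + b + M / 2 * ‖s‖ ^ 3 = 0 := by
    set P : ℝ → ℝ := fun t => a * t + b / 2 * t ^ 2 + M / 6 * ‖s‖ ^ 3 * t ^ 3 with hP
    have hlm : IsLocalMin P 1 := by
      have hev : ∀ᶠ t in nhds (1:ℝ), 0 < t := eventually_gt_nhds (by norm_num)
      filter_upwards [hev] with t ht
      have h := hmin (t • s)
      rw [real_inner_smul_right, LinearMap.map_smul, inner_smul_left, inner_smul_right,
        norm_smul, Real.norm_eq_abs, abs_of_pos ht] at h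
      simp only [RCLike.star_def, conj_trivial] at h
      rw [← ha, ← hb] at h
      have hP1 : P 1 = a + b / 2 + M / 6 * ‖s‖ ^ 3 := by simp [hP]
      have hPt : P t = t * a + 1 / 2 * (t * (t * b)) + M / 6 * ((t * ‖s‖) ^ 3) := by
        simp only [hP]; ring
      rw [hP1, hPt]
      linarith [h]
    have hd : HasDerivAt P (a + b + M / 2 * ‖s‖ ^ 3) 1 := by
      have d1 : HasDerivAt (fun t : ℝ => a * t) a 1 := by
        simpa using (hasDerivAt_id (1:ℝ)).const_mul a
      have d2 : HasDerivAt (fun t : ℝ => b / 2 * t ^ 2) b 1 := by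
        have := (hasDerivAt_pow 2 (1:ℝ)).const_mul (b / 2)
        exact this.congr_deriv (by push_cast; ring)
      have d3 : HasDerivAt (fun t : ℝ => M / 6 * ‖s‖ ^ 3 * t ^ 3) (M / 2 * ‖s‖ ^ 3) 1 := by
        have := (hasDerivAt_pow 3 (1:ℝ)).const_mul (M / 6 * ‖s‖ ^ 3)
        exact this.congr_deriv (by push_cast; ring)
      exact (d1.add d2).add d3
    have h0 := hlm.deriv_eq_zero
    rwa [hd.deriv] at h0
  have hkey : a + b / 2 ≤ -(M / 4) * ‖s‖ ^ 3 := by linarith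
  -- error bounds
  set ns := ‖s‖ with hns
  set np := ‖s_prev‖ with hnp
  have hns0 : (0:ℝ) ≤ ns := norm_nonneg s
  have hnp0 : (0:ℝ) ≤ np := norm_nonneg s_prev
  have Egrad : ⟪gradient f x, s⟫ ≤ a + β * (np ^ 2 + ε₁ ^ 2) * ns := by
    have hdiff : ⟪gradient f x, s⟫ - a = ⟪gradient f x - g, s⟫ := by
      rw [inner_sub_left, ha]
    have hcs : ⟪gradient f x - g, s⟫ ≤ ‖gradient f x - g‖ * ‖s‖ := real_inner_le_norm _ _
    have hn : ‖gradient f x - g‖ ≤ β * (np ^ 2 + ε₁ ^ 2) := by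
      rw [norm_sub_rev]
      refine le_trans hgerr ?_
      apply mul_le_mul_of_nonneg_left _ hβ
      exact max_le (by nlinarith) (by nlinarith)
    linarith [hdiff, hcs, mul_le_mul_of_nonneg_right hn hns0]
  have EH : ⟪s, A x s⟫ ≤ b + α * (np + ε₁) * ns ^ 2 := by
    have happ : (Matrix.toEuclideanCLM (𝕜 := ℝ) H) s = Matrix.toEuclideanLin H s := by
      have h := LinearMap.congr_fun (Matrix.coe_toEuclideanCLM_eq_toEuclideanLin (𝕜 := ℝ) H) s
      simpa using h
    have hbCLM : ⟪s, (Matrix.toEuclideanCLM (𝕜 := ℝ) H) s⟫ = b := by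
      rw [happ, hb]
    have hdiff : ⟪s, A x s⟫ - b = ⟪s, (A x - Matrix.toEuclideanCLM (𝕜 := ℝ) H) s⟫ := by
      rw [ContinuousLinearMap.sub_apply, inner_sub_right, hbCLM]
    have hcs : ⟪s, (A x - Matrix.toEuclideanCLM (𝕜 := ℝ) H) s⟫
        ≤ ‖s‖ * (‖A x - Matrix.toEuclideanCLM (𝕜 := ℝ) H‖ * ‖s‖) :=
      le_trans (real_inner_le_norm _ _)
        (mul_le_mul_of_nonneg_left ((A x - Matrix.toEuclideanCLM (𝕜 := ℝ) H).le_opNorm s) (norm_nonneg s))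
    have hn : ‖A x - Matrix.toEuclideanCLM (𝕜 := ℝ) H‖ ≤ α * (np + ε₁) := by
      rw [norm_sub_rev]
      refine le_trans hHerr ?_
      apply mul_le_mul_of_nonneg_left _ hα
      exact max_le (by linarith) (by linarith)
    have h1 := mul_le_mul_of_nonneg_right (mul_le_mul_of_nonneg_right hn hns0) hns0
    have h2 : ‖s‖ * (‖A x - Matrix.toEuclideanCLM (𝕜 := ℝ) H‖ * ‖s‖)
        = ‖A x - Matrix.toEuclideanCLM (𝕜 := ℝ) H‖ * ns * ns := by rw [hns]; ring
    rw [h2] at hcs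
    nlinarith [hdiff, hcs, h1]
  -- cube inequalities
  have c1 : np ^ 2 * ns ≤ np ^ 3 + ns ^ 3 := aux_cube hnp0 hns0
  have c2 : ε₁ ^ 2 * ns ≤ ε₁ ^ 3 + ns ^ 3 := aux_cube hε₁.le hns0
  have c3 : np * ns ^ 2 ≤ np ^ 3 + ns ^ 3 := by
    have := aux_cube hns0 hnp0; linarith [this]; 
  have c4 : ε₁ * ns ^ 2 ≤ ε₁ ^ 3 + ns ^ 3 := by
    have := aux_cube hns0 hε₁.le; linarith [this]; 
  -- combine
  have e1 : β * (np ^ 2 + ε₁ ^ 2) * ns ≤ β * (np ^ 3 + ε₁ ^ 3 + 2 * ns ^ 3) := by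
    have : (np ^ 2 + ε₁ ^ 2) * ns ≤ np ^ 3 + ε₁ ^ 3 + 2 * ns ^ 3 := by nlinarith
    calc β * (np ^ 2 + ε₁ ^ 2) * ns = β * ((np ^ 2 + ε₁ ^ 2) * ns) := by ring
      _ ≤ β * (np ^ 3 + ε₁ ^ 3 + 2 * ns ^ 3) := mul_le_mul_of_nonneg_left this hβ
  have e2 : α * (np + ε₁) * ns ^ 2 ≤ α * (np ^ 3 + ε₁ ^ 3 + 2 * ns ^ 3) := by
    have : (np + ε₁) * ns ^ 2 ≤ np ^ 3 + ε₁ ^ 3 + 2 * ns ^ 3 := by nlinarith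
    calc α * (np + ε₁) * ns ^ 2 = α * ((np + ε₁) * ns ^ 2) := by ring
      _ ≤ α * (np ^ 3 + ε₁ ^ 3 + 2 * ns ^ 3) := mul_le_mul_of_nonneg_left this hα
  linarith [hTaylor, Egrad, EH, hkey, e1, e2]
end

section
/- Let f : ℝ^d → ℝ be twice continuously differentiable with L₂-Lipschitz Hessian (in operator norm). Fix x ∈ ℝ^d, a previous step s_prev ∈ ℝ^d, ε₁ > 0, M > 0, α ≥ 0, β ≥ 0, a vector g ∈ ℝ^d and a symmetric d×d matrix H satisfying the inexact conditions ‖H − ∇²f(x)‖ ≤ α·max{‖s_prev‖, ε₁} and ‖g − ∇f(x)‖ ≤ β·max{‖s_prev‖², ε₁²}. Let s be a global minimizer over ℝ^d of u ↦ gᵀu + (1/2)uᵀHu + (M/6)‖u‖³, and suppose the termination condition ‖s_prev‖ ≤ ε₁ and ‖s‖ ≤ ε₁ holds. Then the Hessian at the new point satisfies ∇²f(x + s) ⪰ −((M + 2L₂)/2 + 2α)·ε₁·I, i.e., ∇²f(x + s) + ((M + 2L₂)/2 + 2α)ε₁·I is positive semidefinite. -/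
open RealInnerProductSpace

lemma aux_le (X K : ℝ) (h : ∀ t : ℝ, 0 < t → t ≤ 1 → X ≤ K * t) : X ≤ 0 := by
  by_contra hX
  push_neg at hX
  have hKpos : (0:ℝ) < |K| + 1 := by positivity
  set t := min 1 (X / (2 * (|K| + 1))) with ht
  have ht0 : 0 < t := lt_min one_pos (by positivity)
  have ht1 : t ≤ 1 := min_le_left _ _
  have h1 := h t ht0 ht1
  have h2 : K * t ≤ (|K| + 1) * t := by
    have := le_abs_self K
    nlinarith
  have h3 : (|K| + 1) * t ≤ (|K| + 1) * (X / (2 * (|K| + 1))) :=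
    mul_le_mul_of_nonneg_left (min_le_right _ _) hKpos.le
  have h4 : (|K| + 1) * (X / (2 * (|K| + 1))) = X / 2 := by
    field_simp
  linarith

lemma nonneg_of_mul_left (T X : ℝ) (hT : 0 < T) (h : 0 ≤ T * X) : 0 ≤ X := by
  by_contra hx
  push_neg at hx
  nlinarith

lemma real_s0 (M c q L : ℝ) (hM : 0 < M)
    (h : ∀ t : ℝ, 0 < t → t ≤ 1 →
      0 ≤ t * L + t^2 * (1/2 * q) + M/6 * (t*c)^3 ∧
      0 ≤ t * (-L) + t^2 * (1/2 * q) + M/6 * (t*c)^3) :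
    0 ≤ q := by
  have hX : -q ≤ 0 := by
    apply aux_le _ (M/3 * c^3)
    intro t ht0 ht1
    obtain ⟨h1, h2⟩ := h t ht0 ht1
    have hs : 0 ≤ t^2 * (q + M/3 * c^3 * t) := by linarith
    have := nonneg_of_mul_left (t^2) _ (by positivity) hs
    linarith
  linarith

lemma real_b0 (M a c q L : ℝ) (hM : 0 < M) (ha : 0 < a) (hc : 0 ≤ c)
    (h : ∀ t : ℝ, 0 < t → t ≤ 1 → ∃ n m : ℝ, 0 ≤ n ∧ 0 ≤ m ∧
      n^2 = a^2 + t^2*c^2 ∧ m^2 = a^2 + t^2*c^2 ∧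
      0 ≤ t * L + t^2 * (1/2 * q) + M/6 * (n^3 - a^3) ∧
      0 ≤ t * (-L) + t^2 * (1/2 * q) + M/6 * (m^3 - a^3)) :
    -(M/2 * a * c^2) ≤ q := by
  have hX : -(2*a*q + M*a^2*c^2) ≤ 0 := by
    apply aux_le _ (M * c^4)
    intro t ht0 ht1
    obtain ⟨n, m, hn0, hm0, hn2, hm2, h1, h2⟩ := h t ht0 ht1
    have cube : ∀ x : ℝ, 0 ≤ x → x^2 = a^2 + t^2*c^2 →
        2*a*(x^3 - a^3) ≤ 3*c^2*t^2*(a^2 + t^2*c^2) := by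
      intro x hx0 hx2
      have hxa : a ≤ x := by nlinarith [sq_nonneg t, sq_nonneg c]
      have e1 : (x^3 - a^3)*(x + a) = t^2*c^2*(x^2 + x*a + a^2) := by
        linear_combination (x^2 + x*a + a^2) * hx2
      have hfac : (0:ℝ) ≤ x^2 + x*a + a^2 := by
        have := mul_nonneg hx0 ha.le
        nlinarith [sq_nonneg x, sq_nonneg a]
      have hx3 : (0:ℝ) ≤ x^3 - a^3 := by
        nlinarith [mul_nonneg (sub_nonneg.mpr hxa) hfac]
      have h5 : 0 ≤ (x - a)*(x^3 - a^3) := mul_nonneg (by linarith) hx3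
      have h6 : t^2*c^2*(x^2 + x*a + a^2) ≤ t^2*c^2*(3*(a^2 + t^2*c^2)) := by
        apply mul_le_mul_of_nonneg_left _ (by positivity)
        nlinarith [hxa, hx0, hx2]
      nlinarith [e1, h5, h6]
    have c1 := cube n hn0 hn2
    have c2 := cube m hm0 hm2
    have hsum : 0 ≤ t^2 * q + M/6 * ((n^3 - a^3) + (m^3 - a^3)) := by linarith
    have hA : 0 ≤ 2*a*(t^2 * q + M/6 * ((n^3 - a^3) + (m^3 - a^3))) :=
      mul_nonneg (by positivity) hsum
    have hB : 2*a*((n^3 - a^3) + (m^3 - a^3)) ≤ 6*c^2*t^2*(a^2 + t^2*c^2) := by linarith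
    have hB' : M/6*(2*a*((n^3 - a^3) + (m^3 - a^3))) ≤ M/6*(6*c^2*t^2*(a^2 + t^2*c^2)) :=
      mul_le_mul_of_nonneg_left hB (by positivity)
    have ht4 : t^4 ≤ t^3 := pow_le_pow_of_le_one ht0.le ht1 (by norm_num)
    have ht4' : M*c^4*t^4 ≤ M*c^4*t^3 := mul_le_mul_of_nonneg_left ht4 (by positivity)
    have hs : 0 ≤ t^2 * ((2*a*q + M*a^2*c^2) + M*c^4*t) := by linarith [hA, hB', ht4']
    have := nonneg_of_mul_left (t^2) _ (by positivity) hs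
    linarith
  have h4 : 0 ≤ 2*a*(q + M/2*a*c^2) := by linarith [hX]
  have := nonneg_of_mul_left (2*a) _ (by positivity) h4
  linarith

lemma real_bpos (M a b c q L : ℝ) (hM : 0 < M) (ha : 0 < a) (hb : 0 < b) (hc : 0 < c)
    (h : ∀ t : ℝ, 0 < t → t ≤ 1 → ∃ n : ℝ, 0 ≤ n ∧
      n^2 = a^2 + 2*t*b + t^2*c^2 ∧ n ≤ a + t*c ∧
      0 ≤ t * L + t^2 * (1/2 * q) + M/6 * (n^3 - a^3))
    (hrefl : 0 ≤ (-(2*b)/c^2) * L + (-(2*b)/c^2)^2 * (1/2 * q)) :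
    -(M/2 * a * c^2) ≤ q := by
  set C := (b*c*(3*a+2*c) + 3*c^2*(a+c)^2)/a with hC
  have hC0 : 0 ≤ C := by positivity
  have hCa : C * a = b*c*(3*a+2*c) + 3*c^2*(a+c)^2 := by
    rw [hC]; field_simp
  have stepA : 0 ≤ L + M/2*a*b := by
    have hX : -(L + M/2*a*b) ≤ 0 := by
      apply aux_le _ (1/2 * q + M/6 * C)
      intro t ht0 ht1
      obtain ⟨n, hn0, hn2, hnub, h1⟩ := h t ht0 ht1
      have hna : (0:ℝ) < n + a := by linarith
      have hnc : n ≤ a + c := by nlinarith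
      have hnma : n - a ≤ t*c := by linarith
      have eKey : (n^3 - a^3)*(n + a)
          = 3*a*b*t*(n + a) + b*t*((n - a)*(2*n + a)) + t^2*c^2*(n^2 + n*a + a^2) := by
        linear_combination (n^2 + n*a + a^2) * hn2
      have s1 : (n - a)*(2*n + a) ≤ (t*c)*(2*n + a) :=
        mul_le_mul_of_nonneg_right hnma (by linarith)
      have s2 : (t*c)*(2*n + a) ≤ (t*c)*(2*(a+c) + a) :=
        mul_le_mul_of_nonneg_left (by linarith) (by positivity)
      have hb1 : b*t*((n - a)*(2*n + a)) ≤ b*t*((t*c)*(3*a + 2*c)) := by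
        apply mul_le_mul_of_nonneg_left _ (by positivity)
        calc (n - a)*(2*n + a) ≤ (t*c)*(2*n + a) := s1
          _ ≤ (t*c)*(2*(a+c) + a) := s2
          _ = (t*c)*(3*a + 2*c) := by ring
      have hb2 : t^2*c^2*(n^2 + n*a + a^2) ≤ t^2*c^2*(3*(a+c)^2) := by
        apply mul_le_mul_of_nonneg_left _ (by positivity)
        nlinarith [hn0, hnc, ha.le, hc.le]
      have hb3 : C*t^2*a ≤ C*t^2*(n + a) :=
        mul_le_mul_of_nonneg_left (by linarith) (by positivity)
      have hCat : C*t^2*a = b*c*(3*a+2*c)*t^2 + 3*c^2*(a+c)^2*t^2 := by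
        linear_combination t^2 * hCa
      have key : (n^3 - a^3)*(n + a) ≤ (3*a*b*t + C*t^2)*(n + a) := by
        linarith [eKey, hb1, hb2, hb3, hCat]
      have cube : n^3 - a^3 ≤ 3*a*b*t + C*t^2 := le_of_mul_le_mul_right key hna
      have cube' : M/6*(n^3 - a^3) ≤ M/6*(3*a*b*t + C*t^2) :=
        mul_le_mul_of_nonneg_left cube (by positivity)
      have hdiv : 0 ≤ t * ((L + M/2*a*b) + t * (1/2*q + M/6*C)) := by linarith [h1, cube']
      have := nonneg_of_mul_left t _ ht0 hdiv
      linarith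
    linarith
  have e : c^4 * ((-(2*b)/c^2) * L + (-(2*b)/c^2)^2 * (1/2 * q)) = -2*b*c^2*L + 2*b^2*q := by
    field_simp
  have h1 : 0 ≤ -2*b*c^2*L + 2*b^2*q := by
    have h0 := mul_nonneg (by positivity : (0:ℝ) ≤ c^4) hrefl
    rw [e] at h0
    exact h0
  have h3 : 0 ≤ 2*b*c^2*(L + M/2*a*b) := mul_nonneg (by positivity) stepA
  have h4 : 0 ≤ 2*b^2 * (q + M/2*a*c^2) := by linarith [h1, h3]
  have := nonneg_of_mul_left (2*b^2) _ (by positivity) h4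
  linarith

section
variable {E : Type*} [NormedAddCommGroup E] [InnerProductSpace ℝ E]

lemma base_ineq (A : E →ₗ[ℝ] E) (hsym : ∀ u v : E, ⟪A u, v⟫ = ⟪u, A v⟫)
    (g s : E) (M : ℝ)
    (hmin : ∀ u : E, ⟪g, s⟫ + (1/2) * ⟪s, A s⟫ + M/6 * ‖s‖^3
      ≤ ⟪g, u⟫ + (1/2) * ⟪u, A u⟫ + M/6 * ‖u‖^3)
    (t : ℝ) (w : E) :
    0 ≤ t * (⟪g, w⟫ + ⟪s, A w⟫) + t^2 * (1/2 * ⟪w, A w⟫)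
      + M/6 * (‖s + t • w‖^3 - ‖s‖^3) := by
  have h := hmin (s + t • w)
  have hws : ⟪w, A s⟫ = ⟪s, A w⟫ := by
    rw [real_inner_comm]; exact hsym s w
  simp only [inner_add_right, inner_add_left, real_inner_smul_right, real_inner_smul_left,
    map_add, map_smul, LinearMap.smul_apply, smul_smul] at h
  rw [hws] at h
  nlinarith [h]

lemma norm_sq_expand (s w : E) (t : ℝ) :
    ‖s + t • w‖^2 = ‖s‖^2 + 2 * t * ⟪s, w⟫ + t^2 * ‖w‖^2 := by
  rw [norm_add_sq_real, real_inner_smul_right, norm_smul, Real.norm_eq_abs, mul_pow, sq_abs]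
  ring

lemma key_psd (A : E →ₗ[ℝ] E) (hsym : ∀ u v : E, ⟪A u, v⟫ = ⟪u, A v⟫)
    (g s : E) (M : ℝ) (hM : 0 < M)
    (hmin : ∀ u : E, ⟪g, s⟫ + (1/2) * ⟪s, A s⟫ + M/6 * ‖s‖^3
      ≤ ⟪g, u⟫ + (1/2) * ⟪u, A u⟫ + M/6 * ‖u‖^3) :
    ∀ w : E, -(M/2 * ‖s‖ * ‖w‖^2) ≤ ⟪w, A w⟫ := by
  have base := base_ineq A hsym g s M hmin
  suffices hkey : ∀ w : E, 0 ≤ ⟪s, w⟫ → -(M/2 * ‖s‖ * ‖w‖^2) ≤ ⟪w, A w⟫ by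
    intro w
    rcases le_or_gt 0 ⟪s, w⟫ with hb | hb
    · exact hkey w hb
    · have h := hkey (-w) (by rw [inner_neg_right]; linarith)
      simpa [inner_neg_left, inner_neg_right, norm_neg] using h
  intro w hb
  have ha0 : 0 ≤ ‖s‖ := norm_nonneg s
  have hc0 : 0 ≤ ‖w‖ := norm_nonneg w
  rcases eq_or_lt_of_le hc0 with hc1 | hc1
  · -- w = 0
    have hw : w = 0 := by rwa [eq_comm, norm_eq_zero] at hc1
    simp [hw]
  rcases eq_or_lt_of_le ha0 with ha1 | ha1
  · -- s = 0
    have hs : s = 0 := by rwa [eq_comm, norm_eq_zero] at ha1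
    have hq : 0 ≤ ⟪w, A w⟫ := by
      apply real_s0 M ‖w‖ _ ⟪g, w⟫ hM
      intro t ht0 ht1
      constructor
      · have h1 := base t w
        rw [hs] at h1
        simpa [norm_smul, abs_of_pos ht0] using h1
      · have h2 := base t (-w)
        rw [hs] at h2
        simp only [inner_neg_right, map_neg, inner_neg_left, neg_neg, inner_zero_left,
          norm_zero] at h2
        have hn : ‖(0:E) + t • -w‖ = t * ‖w‖ := by
          rw [zero_add, norm_smul, norm_neg, Real.norm_eq_abs, abs_of_pos ht0]
        rw [hn] at h2
        have hz : ⟪(0:E), A w⟫ = 0 := inner_zero_left _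
        linarith [h2]
    rw [← ha1]
    simpa using hq
  -- ‖s‖ > 0
  rcases eq_or_lt_of_le hb with hb1 | hb1
  · -- ⟪s, w⟫ = 0
    apply real_b0 M ‖s‖ ‖w‖ _ (⟪g, w⟫ + ⟪s, A w⟫) hM ha1 hc0
    intro t ht0 ht1
    refine ⟨‖s + t • w‖, ‖s + t • (-w)‖, norm_nonneg _, norm_nonneg _, ?_, ?_, ?_, ?_⟩
    · rw [norm_sq_expand, ← hb1]; ring
    · rw [norm_sq_expand, inner_neg_right, ← hb1, norm_neg]; ring
    · simpa using base t w
    · have h2 := base t (-w)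
      simp only [inner_neg_right, map_neg, inner_neg_left, neg_neg] at h2
      linarith [h2]
  · -- ⟪s, w⟫ > 0
    apply real_bpos M ‖s‖ ⟪s, w⟫ ‖w‖ _ (⟪g, w⟫ + ⟪s, A w⟫) hM ha1 hb1 hc1
    · intro t ht0 ht1
      refine ⟨‖s + t • w‖, norm_nonneg _, norm_sq_expand s w t, ?_, by simpa using base t w⟩
      calc ‖s + t • w‖ ≤ ‖s‖ + ‖t • w‖ := norm_add_le _ _
        _ = ‖s‖ + t * ‖w‖ := by rw [norm_smul, Real.norm_eq_abs, abs_of_pos ht0]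
    · set τ : ℝ := -(2*⟪s, w⟫)/‖w‖^2 with hτ
      have hc2 : ‖w‖^2 ≠ 0 := by positivity
      have hn2 : ‖s + τ • w‖^2 = ‖s‖^2 := by
        rw [norm_sq_expand, hτ]
        field_simp
        ring
      have hneq : ‖s + τ • w‖ = ‖s‖ := by
        have := congrArg Real.sqrt hn2
        rwa [Real.sqrt_sq (norm_nonneg _), Real.sqrt_sq (norm_nonneg _)] at this
      have h1 := base τ w
      rw [hneq] at h1
      simp only [sub_self, mul_zero, add_zero] at h1
      linarith [h1]

end


/-- Hessian lower bound at the new point upon termination.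
Under the inexact conditions and the termination condition
`‖s_prev‖ ≤ ε₁` and `‖s‖ ≤ ε₁`, the Hessian at `x + s` satisfies
`∇²f(x + s) ⪰ −((M + 2L₂)/2 + 2α)ε₁·I`, stated as
`⟪v, ∇²f(x+s) v⟫ ≥ −((M + 2L₂)/2 + 2α)ε₁‖v‖²` for every `v`. -/
theorem stmt7 (d : ℕ) (f : EuclideanSpace ℝ (Fin d) → ℝ) (L₂ : ℝ)
    (hf : ContDiff ℝ 2 f)
    (hLip : ∀ x y : EuclideanSpace ℝ (Fin d),
      ‖fderiv ℝ (gradient f) x - fderiv ℝ (gradient f) y‖ ≤ L₂ * ‖x - y‖)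
    (x s_prev : EuclideanSpace ℝ (Fin d)) (ε₁ M α β : ℝ)
    (hε₁ : 0 < ε₁) (hM : 0 < M) (hα : 0 ≤ α) (hβ : 0 ≤ β)
    (g : EuclideanSpace ℝ (Fin d)) (H : Matrix (Fin d) (Fin d) ℝ) (hH : H.IsSymm)
    (hHerr : ‖Matrix.toEuclideanCLM (𝕜 := ℝ) H - fderiv ℝ (gradient f) x‖
      ≤ α * max ‖s_prev‖ ε₁)
    (hgerr : ‖g - gradient f x‖ ≤ β * max (‖s_prev‖ ^ 2) (ε₁ ^ 2))
    (s : EuclideanSpace ℝ (Fin d))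
    (hmin : ∀ u : EuclideanSpace ℝ (Fin d),
      ⟪g, s⟫ + (1 / 2) * ⟪s, Matrix.toEuclideanLin H s⟫ + M / 6 * ‖s‖ ^ 3
        ≤ ⟪g, u⟫ + (1 / 2) * ⟪u, Matrix.toEuclideanLin H u⟫ + M / 6 * ‖u‖ ^ 3)
    (hterm_prev : ‖s_prev‖ ≤ ε₁) (hterm : ‖s‖ ≤ ε₁) :
    ∀ v : EuclideanSpace ℝ (Fin d),
      -(((M + 2 * L₂) / 2 + 2 * α) * ε₁) * ‖v‖ ^ 2
        ≤ ⟪v, fderiv ℝ (gradient f) (x + s) v⟫ := by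
  intro v
  by_cases hv : v = 0
  · simp [hv]
  -- L₂ is nonnegative
  have hvpos : 0 < ‖v‖ := norm_pos_iff.mpr hv
  have hL2 : 0 ≤ L₂ := by
    have h := hLip x (x + v)
    have hxv : x - (x + v) = -v := by abel
    rw [hxv, norm_neg] at h
    have h0 : (0:ℝ) ≤ ‖fderiv ℝ (gradient f) x - fderiv ℝ (gradient f) (x + v)‖ :=
      norm_nonneg _
    nlinarith [h, h0, hvpos]
  -- symmetry of the linear map
  have hH' : H.IsHermitian := by
    rwa [Matrix.IsHermitian, Matrix.conjTranspose_eq_transpose_of_trivial]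
  have hsym : ∀ u v : EuclideanSpace ℝ (Fin d),
      ⟪Matrix.toEuclideanLin H u, v⟫ = ⟪u, Matrix.toEuclideanLin H v⟫ :=
    fun u v => (Matrix.isHermitian_iff_isSymmetric.mp hH') u v
  have hq := key_psd (Matrix.toEuclideanLin H) hsym g s M hM hmin v
  set B := fderiv ℝ (gradient f) (x + s) with hB
  set Fx := fderiv ℝ (gradient f) x with hFx
  set Ac := Matrix.toEuclideanCLM (𝕜 := ℝ) H with hAc
  have hAceq : Ac v = Matrix.toEuclideanLin H v := rfl
  -- operator norm bound
  have hop : ‖Ac - B‖ ≤ α * ε₁ + L₂ * ε₁ := by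
    have htri : ‖Ac - B‖ ≤ ‖Ac - Fx‖ + ‖Fx - B‖ := by
      calc ‖Ac - B‖ = ‖(Ac - Fx) + (Fx - B)‖ := by rw [sub_add_sub_cancel]
        _ ≤ ‖Ac - Fx‖ + ‖Fx - B‖ := norm_add_le _ _
    have h1 : ‖Ac - Fx‖ ≤ α * ε₁ := by
      rw [max_eq_right hterm_prev] at hHerr
      exact hHerr
    have h2 : ‖Fx - B‖ ≤ L₂ * ε₁ := by
      have h := hLip x (x + s)
      have hxs : x - (x + s) = -s := by abel
      rw [hxs, norm_neg] at h
      calc ‖Fx - B‖ ≤ L₂ * ‖s‖ := h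
        _ ≤ L₂ * ε₁ := mul_le_mul_of_nonneg_left hterm hL2
    linarith
  -- inner product bound
  have h3 : ⟪v, (Ac - B) v⟫ ≤ (α * ε₁ + L₂ * ε₁) * ‖v‖^2 := by
    calc ⟪v, (Ac - B) v⟫ ≤ ‖v‖ * ‖(Ac - B) v‖ := real_inner_le_norm _ _
      _ ≤ ‖v‖ * (‖Ac - B‖ * ‖v‖) :=
        mul_le_mul_of_nonneg_left ((Ac - B).le_opNorm v) (norm_nonneg v)
      _ ≤ ‖v‖ * ((α * ε₁ + L₂ * ε₁) * ‖v‖) := by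
        apply mul_le_mul_of_nonneg_left _ (norm_nonneg v)
        exact mul_le_mul_of_nonneg_right hop (norm_nonneg v)
      _ = (α * ε₁ + L₂ * ε₁) * ‖v‖^2 := by ring
  have h4 : ⟪v, B v⟫ = ⟪v, Ac v⟫ - ⟪v, (Ac - B) v⟫ := by
    rw [ContinuousLinearMap.sub_apply, inner_sub_right]
    ring
  rw [h4, hAceq]
  have hs1 : M/2 * ‖s‖ * ‖v‖^2 ≤ M/2 * ε₁ * ‖v‖^2 := by
    have : M/2 * ‖s‖ ≤ M/2 * ε₁ := mul_le_mul_of_nonneg_left hterm (by positivity)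
    exact mul_le_mul_of_nonneg_right this (sq_nonneg _)
  have hs2 : α * ε₁ * ‖v‖^2 ≤ 2 * α * ε₁ * ‖v‖^2 := by
    have h0 : 0 ≤ α * ε₁ * ‖v‖^2 := by positivity
    linarith
  linarith [hq, h3, hs1, hs2]
end

section
/- Let f : ℝ^d → ℝ be twice continuously differentiable with L₂-Lipschitz Hessian (in operator norm) and bounded below by f*. Let ε₁ > 0, M > 0, α ≥ 0, β ≥ 0 with γ := (3M − 2L₂)/24 − (5/2)β − (5/4)α > 0. Let (x_i)_{i=0}^{k+1}, (s_i)_{i=0}^{k+1} be sequences in ℝ^d with ‖s₀‖ = ε₁, x_{i+1} = x_i + s_{i+1} for 0 ≤ i ≤ k, where for each 0 ≤ i ≤ k, s_{i+1} is a global minimizer over ℝ^d of u ↦ g_iᵀu + (1/2)uᵀH_i u + (M/6)‖u‖³ for some g_i ∈ ℝ^d and symmetric d×d matrix H_i satisfying ‖H_i − ∇²f(x_i)‖ ≤ α·max{‖s_i‖, ε₁} and ‖g_i − ∇f(x_i)‖ ≤ β·max{‖s_i‖², ε₁²}. Suppose max{‖s_i‖, ‖s_{i+1}‖} ≥ ε₁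 for every 1 ≤ i ≤ k−1 and the final termination condition max{‖s_k‖, ‖s_{k+1}‖} ≤ ε₁ holds. Then ∑_{i=1}^{k+1} ‖s_i‖³ ≤ (f(x₀) − f* + (2β + α + 2γ)ε₁³)/γ. -/
open RealInnerProductSpace

theorem mono01 (h h' : ℝ → ℝ) (hd : ∀ t, HasDerivAt h (h' t) t)
    (hpos : ∀ t ∈ Set.Icc (0:ℝ) 1, 0 ≤ h' t) : ∀ t ∈ Set.Icc (0:ℝ) 1, h 0 ≤ h t := by
  have hmono : MonotoneOn h (Set.Icc (0:ℝ) 1) := by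
    apply monotoneOn_of_deriv_nonneg (convex_Icc 0 1)
    · exact fun t _ => ((hd t).continuousAt).continuousWithinAt
    · exact fun t _ => ((hd t).differentiableAt).differentiableWithinAt
    · intro t ht
      rw [interior_Icc] at ht
      rw [(hd t).deriv]
      exact hpos t ⟨le_of_lt ht.1, le_of_lt ht.2⟩
  intro t ht
  exact hmono ⟨le_refl 0, zero_le_one⟩ ht ht.1


theorem grad_inner {d : ℕ} (f : EuclideanSpace ℝ (Fin d) → ℝ) (y v : EuclideanSpace ℝ (Fin d)) :
    ⟪gradient f y, v⟫ = fderiv ℝ f y v := by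
  rw [gradient]; exact InnerProductSpace.toDual_symm_apply

theorem grad_diff {d : ℕ} (f : EuclideanSpace ℝ (Fin d) → ℝ) (hf : ContDiff ℝ 2 f) :
    Differentiable ℝ (gradient f) := by
  have h1 : ContDiff ℝ 1 (fderiv ℝ f) := hf.fderiv_right (by norm_num)
  have hd : Differentiable ℝ (fderiv ℝ f) := h1.differentiable one_ne_zero
  set b := EuclideanSpace.basisFun (Fin d) ℝ with hb
  have key : gradient f = fun y => ∑ i : Fin d, (fderiv ℝ f y (b i)) • (b i : EuclideanSpace ℝ (Fin d)) := by
    funext y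
    apply ext_inner_right ℝ
    intro v
    have hv : v = ∑ i, ⟪(b i : EuclideanSpace ℝ (Fin d)), v⟫ • (b i : EuclideanSpace ℝ (Fin d)) := by
      conv_lhs => rw [← b.sum_repr v]
      simp [OrthonormalBasis.repr_apply_apply]
    rw [grad_inner, sum_inner]
    conv_lhs => rw [hv, map_sum]
    congr 1; funext i
    rw [map_smul, inner_smul_left]
    simp [mul_comm, smul_eq_mul]
  rw [key]
  apply Differentiable.fun_sum
  intro i _
  exact ((ContinuousLinearMap.apply ℝ ℝ ((b i : EuclideanSpace ℝ (Fin d)))).differentiable.comp hd).smul_const _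


theorem cubic_min_bound {E : Type*} [NormedAddCommGroup E] [InnerProductSpace ℝ E]
    (g s : E) (L : E →ₗ[ℝ] E) (M : ℝ)
    (h : ∀ u : E, ⟪g, s⟫ + (1/2) * ⟪s, L s⟫ + M/6 * ‖s‖^3
        ≤ ⟪g, u⟫ + (1/2) * ⟪u, L u⟫ + M/6 * ‖u‖^3) :
    ⟪g, s⟫ + (1/2) * ⟪s, L s⟫ + M/6 * ‖s‖^3 ≤ -(M/12) * ‖s‖^3 := by
  by_cases hs : s = 0
  · subst hs
    simp
  set a : ℝ := ⟪g, s⟫ with ha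
  set b : ℝ := (1/2) * ⟪s, L s⟫ with hb
  set c : ℝ := M/6 * ‖s‖^3 with hc
  -- a ≤ 0 from u = -s
  have haneg : a ≤ 0 := by
    have := h (-s)
    rw [inner_neg_right, map_neg, inner_neg_neg, norm_neg] at this
    rw [← ha, ← hb, ← hc] at this
    linarith
  -- ψ has local min at 1 over (0,∞)
  set ψ : ℝ → ℝ := fun t => a * t + b * t^2 + c * t^3 with hψ
  have hloc : IsLocalMin ψ 1 := by
    have hmem : Set.Ioi (0:ℝ) ∈ nhds (1:ℝ) := Ioi_mem_nhds one_pos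
    filter_upwards [hmem] with t ht
    have := h (t • s)
    rw [inner_smul_right, map_smul, inner_smul_left, inner_smul_right, norm_smul,
      Real.norm_eq_abs, abs_of_pos ht] at this
    simp only [starRingEnd_apply, star_trivial] at this
    calc ψ 1 = a + b + c := by simp [hψ]
    _ ≤ a * t + b * t^2 + c * t^3 := by
        have e : t * ⟪g, s⟫ + 1 / 2 * (t * (t * ⟪s, L s⟫)) + M / 6 * (t * ‖s‖) ^ 3
            = a * t + b * t^2 + c * t^3 := by rw [ha, hb, hc]; ring
        rw [e] at this
        linarith
    _ = ψ t := rfl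
  have hder : HasDerivAt ψ (a + 2*b + 3*c) 1 := by
    have h1 : HasDerivAt (fun t : ℝ => a * t) a 1 := by
      simpa using (hasDerivAt_id (1:ℝ)).const_mul a
    have h2 : HasDerivAt (fun t : ℝ => b * t^2) (b * (2 * 1)) 1 := by
      simpa using (hasDerivAt_pow 2 (1:ℝ)).const_mul b
    have h3 : HasDerivAt (fun t : ℝ => c * t^3) (c * (3 * 1^2)) 1 := by
      simpa using (hasDerivAt_pow 3 (1:ℝ)).const_mul c
    have := (h1.add h2).add h3
    exact this.congr_deriv (by ring)
  have hzero : a + 2*b + 3*c = 0 := by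
    have := hloc.deriv_eq_zero
    rw [hder.deriv] at this
    exact this
  have hcnn : 0 ≤ M/6 * ‖s‖^3 ∨ True := Or.inr trivial
  have : -(M/12) * ‖s‖^3 = -(c/2) := by rw [hc]; ring
  rw [this]
  linarith

theorem taylor_ub {d : ℕ} (f : EuclideanSpace ℝ (Fin d) → ℝ) (L₂ : ℝ)
    (hf : ContDiff ℝ 2 f)
    (hLip : ∀ x y : EuclideanSpace ℝ (Fin d),
      ‖fderiv ℝ (gradient f) x - fderiv ℝ (gradient f) y‖ ≤ L₂ * ‖x - y‖)
    (x s : EuclideanSpace ℝ (Fin d)) :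
    f (x + s) ≤ f x + ⟪gradient f x, s⟫ + (1/2) * ⟪s, fderiv ℝ (gradient f) x s⟫
      + L₂/6 * ‖s‖^3 := by
  set G := gradient f with hG
  set A := fderiv ℝ G with hA
  have hdf : Differentiable ℝ f := hf.differentiable two_ne_zero
  have hGd : Differentiable ℝ G := grad_diff f hf
  set ℓ : ℝ → EuclideanSpace ℝ (Fin d) := fun t => x + t • s with hℓdef
  have hℓ : ∀ t : ℝ, HasDerivAt ℓ s t := by
    intro t
    simpa [hℓdef] using ((hasDerivAt_id t).smul_const s).const_add x
  have hℓ0 : ℓ 0 = x := by simp [hℓdef]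
  have hℓ1 : ℓ 1 = x + s := by simp [hℓdef]
  -- first derivative of φ
  set φ : ℝ → ℝ := fun t => f (ℓ t) with hφdef
  have hφ : ∀ t : ℝ, HasDerivAt φ (⟪s, G (ℓ t)⟫) t := by
    intro t
    have h1 := ((hdf (ℓ t)).hasFDerivAt).comp_hasDerivAt t (hℓ t)
    have h2 : fderiv ℝ f (ℓ t) s = ⟪s, G (ℓ t)⟫ := by
      rw [real_inner_comm]; exact (grad_inner f (ℓ t) s).symm
    rw [← h2]; exact h1
  -- second: derivative of ψ
  set ψ : ℝ → ℝ := fun t => ⟪s, G (ℓ t)⟫ with hψdef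
  have hψ : ∀ t : ℝ, HasDerivAt ψ (⟪s, A (ℓ t) s⟫) t := by
    intro t
    have h1 : HasDerivAt (fun u => G (ℓ u)) (A (ℓ t) s) t :=
      ((hGd (ℓ t)).hasFDerivAt).comp_hasDerivAt t (hℓ t)
    have h2 := ((innerSL ℝ s).hasFDerivAt (x := G (ℓ t))).comp_hasDerivAt t h1
    exact h2
  set B : ℝ := ⟪s, A x s⟫ with hB
  set c : ℝ := L₂ * ‖s‖^3 with hc
  -- bound on second derivative
  have hbound : ∀ t ∈ Set.Icc (0:ℝ) 1, ⟪s, A (ℓ t) s⟫ ≤ B + c * t := by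
    intro t ht
    have h1 : ⟪s, A (ℓ t) s⟫ - B = ⟪s, (A (ℓ t) - A x) s⟫ := by
      rw [ContinuousLinearMap.sub_apply, inner_sub_right]
    have h2 : ⟪s, (A (ℓ t) - A x) s⟫ ≤ ‖s‖ * ‖(A (ℓ t) - A x) s‖ :=
      real_inner_le_norm _ _
    have h3 : ‖(A (ℓ t) - A x) s‖ ≤ ‖A (ℓ t) - A x‖ * ‖s‖ :=
      ContinuousLinearMap.le_opNorm _ _
    have h4 : ‖A (ℓ t) - A x‖ ≤ L₂ * (t * ‖s‖) := by
      have := hLip (ℓ t) x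
      have h5 : ℓ t - x = t • s := by simp [hℓdef]
      rw [h5, norm_smul, Real.norm_eq_abs, abs_of_nonneg ht.1] at this
      exact this
    have hs0 : (0:ℝ) ≤ ‖s‖ := norm_nonneg _
    have h6 : ‖s‖ * ‖(A (ℓ t) - A x) s‖ ≤ ‖s‖ * (‖A (ℓ t) - A x‖ * ‖s‖) :=
      mul_le_mul_of_nonneg_left h3 hs0
    have h7 : ‖s‖ * (‖A (ℓ t) - A x‖ * ‖s‖) ≤ ‖s‖ * ((L₂ * (t * ‖s‖)) * ‖s‖) :=
      mul_le_mul_of_nonneg_left (mul_le_mul_of_nonneg_right h4 hs0) hs0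
    have h8 : c * t = ‖s‖ * ((L₂ * (t * ‖s‖)) * ‖s‖) := by rw [hc]; ring
    linarith
  -- step 1 : ψ t ≤ ψ 0 + B t + c t²/2 on [0,1]
  have step1 : ∀ t ∈ Set.Icc (0:ℝ) 1, ψ t ≤ ψ 0 + B * t + c/2 * t^2 := by
    have := mono01 (fun t => ψ 0 + B * t + c/2 * t^2 - ψ t)
      (fun t => B + c * t - ⟪s, A (ℓ t) s⟫) ?_ ?_
    · intro t ht
      have := this t ht
      simp at this
      linarith
    · intro t
      have hp : HasDerivAt (fun t : ℝ => ψ 0 + B * t + c/2 * t^2) (B + c * t) t := by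
        have h1 : HasDerivAt (fun t : ℝ => B * t) B t := by
          simpa using (hasDerivAt_id t).const_mul B
        have h2 : HasDerivAt (fun t : ℝ => c/2 * t^2) (c/2 * (2 * t)) t := by
          simpa using (hasDerivAt_pow 2 t).const_mul (c/2)
        have := (h1.const_add (ψ 0)).add h2
        exact this.congr_deriv (by ring)
      exact hp.sub (hψ t)
    · intro t ht
      have := hbound t ht
      show (0:ℝ) ≤ B + c * t - ⟪s, A (ℓ t) s⟫
      linarith
  -- step 2 : integrate once more
  have step2 : ∀ t ∈ Set.Icc (0:ℝ) 1, φ t ≤ φ 0 + ψ 0 * t + B/2 * t^2 + c/6 * t^3 := by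
    have := mono01 (fun t => φ 0 + ψ 0 * t + B/2 * t^2 + c/6 * t^3 - φ t)
      (fun t => ψ 0 + B * t + c/2 * t^2 - ψ t) ?_ ?_
    · intro t ht
      have := this t ht
      simp at this
      linarith
    · intro t
      have h1 : HasDerivAt (fun t : ℝ => ψ 0 * t) (ψ 0) t := by
        simpa using (hasDerivAt_id t).const_mul (ψ 0)
      have h2 : HasDerivAt (fun t : ℝ => B/2 * t^2) (B/2 * (2 * t)) t := by
        simpa using (hasDerivAt_pow 2 t).const_mul (B/2)
      have h3 : HasDerivAt (fun t : ℝ => c/6 * t^3) (c/6 * (3 * t^2)) t := by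
        simpa using (hasDerivAt_pow 3 t).const_mul (c/6)
      have hp := ((h1.const_add (φ 0)).add h2).add h3
      have hφt : HasDerivAt φ (ψ t) t := hφ t
      have := hp.sub hφt
      exact this.congr_deriv (by ring)
    · intro t ht
      have := step1 t ht
      show (0:ℝ) ≤ ψ 0 + B * t + c/2 * t^2 - ψ t
      linarith
  have := step2 1 ⟨zero_le_one, le_refl 1⟩
  simp [hφdef, hℓ1, hℓ0] at this
  have e1 : ψ 0 = ⟪gradient f x, s⟫ := by
    show ⟪s, G (ℓ 0)⟫ = ⟪gradient f x, s⟫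
    rw [hℓ0]; exact real_inner_comm _ _
  have e3 : L₂/6 * ‖s‖^3 = c/6 := by rw [hc]; ring
  have e4 : (1:ℝ)/2 * ⟪s, A x s⟫ = B/2 := by rw [hB]; ring
  show f (x + s) ≤ f x + ⟪G x, s⟫ + (1/2) * ⟪s, A x s⟫ + L₂/6 * ‖s‖^3
  rw [e3, e4, ← e1]
  linarith


set_option maxHeartbeats 1600000 in
/-- bound on the sum of cubed step norms of SVRC upon termination:
`∑_{i=1}^{k+1} ‖s_i‖³ ≤ (f(x₀) − f* + (2β + α + 2γ)ε₁³)/γ`. -/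
theorem stmt9 (d k : ℕ) (f : EuclideanSpace ℝ (Fin d) → ℝ) (L₂ fstar ε₁ M α β γ : ℝ)
    (hf : ContDiff ℝ 2 f)
    (hLip : ∀ x y : EuclideanSpace ℝ (Fin d),
      ‖fderiv ℝ (gradient f) x - fderiv ℝ (gradient f) y‖ ≤ L₂ * ‖x - y‖)
    (hbdd : ∀ x : EuclideanSpace ℝ (Fin d), fstar ≤ f x)
    (hε₁ : 0 < ε₁) (hM : 0 < M) (hα : 0 ≤ α) (hβ : 0 ≤ β)
    (hγdef : γ = (3 * M - 2 * L₂) / 24 - 5 / 2 * β - 5 / 4 * α) (hγ : 0 < γ)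
    (x s g : ℕ → EuclideanSpace ℝ (Fin d)) (H : ℕ → Matrix (Fin d) (Fin d) ℝ)
    (hs0 : ‖s 0‖ = ε₁)
    (hx : ∀ i ≤ k, x (i + 1) = x i + s (i + 1))
    (hHsym : ∀ i ≤ k, (H i).IsSymm)
    (hHerr : ∀ i ≤ k,
      ‖Matrix.toEuclideanCLM (𝕜 := ℝ) (H i) - fderiv ℝ (gradient f) (x i)‖
        ≤ α * max ‖s i‖ ε₁)
    (hgerr : ∀ i ≤ k, ‖g i - gradient f (x i)‖ ≤ β * max (‖s i‖ ^ 2) (ε₁ ^ 2))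
    (hmin : ∀ i ≤ k, ∀ u : EuclideanSpace ℝ (Fin d),
      ⟪g i, s (i + 1)⟫ + (1 / 2) * ⟪s (i + 1), Matrix.toEuclideanLin (H i) (s (i + 1))⟫
          + M / 6 * ‖s (i + 1)‖ ^ 3
        ≤ ⟪g i, u⟫ + (1 / 2) * ⟪u, Matrix.toEuclideanLin (H i) u⟫ + M / 6 * ‖u‖ ^ 3)
    (hnoterm : ∀ i, 1 ≤ i → i ≤ k - 1 → ε₁ ≤ max ‖s i‖ ‖s (i + 1)‖)
    (hterm : max ‖s k‖ ‖s (k + 1)‖ ≤ ε₁) :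
    ∑ i ∈ Finset.Icc 1 (k + 1), ‖s i‖ ^ 3
      ≤ (f (x 0) - fstar + (2 * β + α + 2 * γ) * ε₁ ^ 3) / γ := by
  classical
  set gc : ℕ → ℝ := fun i => ‖s i‖ ^ 3 with hgc
  set Q : ℕ → ℝ := fun i => (max ‖s i‖ ε₁) ^ 3 with hQ
  set S : ℝ := ∑ i ∈ Finset.Icc 1 (k + 1), gc i with hSdef
  have hgcnn : ∀ i, 0 ≤ gc i := fun i => pow_nonneg (norm_nonneg _) 3
  have hS0 : 0 ≤ S := Finset.sum_nonneg fun i _ => hgcnn i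
  -- per-step decrease
  have hstep : ∀ i, i ≤ k →
      (M/4 - L₂/6) * gc (i+1) - (2*β/3 + α/6) * Q i - (β/3 + α/3) * gc (i+1)
        ≤ f (x i) - f (x (i+1)) := by
    intro i hi
    have ha0 : (0:ℝ) ≤ max ‖s i‖ ε₁ := le_trans hε₁.le (le_max_right _ _)
    have hu0 : (0:ℝ) ≤ ‖s (i+1)‖ := norm_nonneg _
    have htay := taylor_ub f L₂ hf hLip (x i) (s (i+1))
    have hcub := cubic_min_bound (g i) (s (i+1)) (Matrix.toEuclideanLin (H i)) M (hmin i hi)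
    have hxip : x (i+1) = x i + s (i+1) := hx i hi
    -- gradient error
    have hg' : ⟪gradient f (x i), s (i+1)⟫
        ≤ ⟪g i, s (i+1)⟫ + β * (max ‖s i‖ ε₁)^2 * ‖s (i+1)‖ := by
      have h1 : ⟪gradient f (x i), s (i+1)⟫ - ⟪g i, s (i+1)⟫
          = ⟪gradient f (x i) - g i, s (i+1)⟫ := (inner_sub_left _ _ _).symm
      have h2 : ⟪gradient f (x i) - g i, s (i+1)⟫
          ≤ ‖gradient f (x i) - g i‖ * ‖s (i+1)‖ := real_inner_le_norm _ _
      have h3 : ‖gradient f (x i) - g i‖ = ‖g i - gradient f (x i)‖ := norm_sub_rev _ _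
      have h4 := hgerr i hi
      have h5 : max (‖s i‖^2) (ε₁^2) = (max ‖s i‖ ε₁)^2 := by
        rcases le_total ‖s i‖ ε₁ with h | h
        · rw [max_eq_right (pow_le_pow_left₀ (norm_nonneg _) h 2), max_eq_right h]
        · rw [max_eq_left (pow_le_pow_left₀ hε₁.le h 2), max_eq_left h]
      rw [h5] at h4
      have h6 : ‖gradient f (x i) - g i‖ * ‖s (i+1)‖
          ≤ (β * (max ‖s i‖ ε₁)^2) * ‖s (i+1)‖ := by
        rw [h3]; exact mul_le_mul_of_nonneg_right h4 hu0
      linarith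
    -- Hessian error
    have hH' : ⟪s (i+1), fderiv ℝ (gradient f) (x i) (s (i+1))⟫
        ≤ ⟪s (i+1), Matrix.toEuclideanLin (H i) (s (i+1))⟫
          + α * (max ‖s i‖ ε₁) * ‖s (i+1)‖^2 := by
      set T := fderiv ℝ (gradient f) (x i) with hT
      set Hc := Matrix.toEuclideanCLM (𝕜 := ℝ) (H i) with hHc
      have hHcL : Hc (s (i+1)) = Matrix.toEuclideanLin (H i) (s (i+1)) := by
        have h0 := Matrix.coe_toEuclideanCLM_eq_toEuclideanLin (A := H i)
        calc Hc (s (i+1)) = ((Hc : EuclideanSpace ℝ (Fin d) →ₗ[ℝ] EuclideanSpace ℝ (Fin d)))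
              (s (i+1)) := rfl
        _ = Matrix.toEuclideanLin (H i) (s (i+1)) := by rw [hHc, h0]
      have h1 : ⟪s (i+1), T (s (i+1))⟫ - ⟪s (i+1), Hc (s (i+1))⟫
          = ⟪s (i+1), (T - Hc) (s (i+1))⟫ := by
        rw [ContinuousLinearMap.sub_apply, inner_sub_right]
      have h2 : ⟪s (i+1), (T - Hc) (s (i+1))⟫ ≤ ‖s (i+1)‖ * ‖(T - Hc) (s (i+1))‖ :=
        real_inner_le_norm _ _
      have h3 : ‖(T - Hc) (s (i+1))‖ ≤ ‖T - Hc‖ * ‖s (i+1)‖ :=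
        ContinuousLinearMap.le_opNorm _ _
      have h4 : ‖T - Hc‖ = ‖Hc - T‖ := norm_sub_rev _ _
      have h5 := hHerr i hi
      have h6 : ‖s (i+1)‖ * ‖(T - Hc) (s (i+1))‖ ≤ ‖s (i+1)‖ * (‖T - Hc‖ * ‖s (i+1)‖) :=
        mul_le_mul_of_nonneg_left h3 hu0
      have h7 : ‖s (i+1)‖ * (‖T - Hc‖ * ‖s (i+1)‖)
          ≤ ‖s (i+1)‖ * ((α * (max ‖s i‖ ε₁)) * ‖s (i+1)‖) := by
        apply mul_le_mul_of_nonneg_left _ hu0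
        apply mul_le_mul_of_nonneg_right _ hu0
        rw [h4]; exact h5
      have h8 : ‖s (i+1)‖ * ((α * (max ‖s i‖ ε₁)) * ‖s (i+1)‖)
          = α * (max ‖s i‖ ε₁) * ‖s (i+1)‖^2 := by ring
      rw [← hHcL]
      linarith
    -- Young's inequalities
    have hy1 : (max ‖s i‖ ε₁)^2 * ‖s (i+1)‖
        ≤ 2/3 * (max ‖s i‖ ε₁)^3 + 1/3 * ‖s (i+1)‖^3 := by
      nlinarith [mul_nonneg (sq_nonneg ((max ‖s i‖ ε₁) - ‖s (i+1)‖))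
        (by linarith : (0:ℝ) ≤ 2 * (max ‖s i‖ ε₁) + ‖s (i+1)‖)]
    have hy2 : (max ‖s i‖ ε₁) * ‖s (i+1)‖^2
        ≤ 1/3 * (max ‖s i‖ ε₁)^3 + 2/3 * ‖s (i+1)‖^3 := by
      nlinarith [mul_nonneg (sq_nonneg ((max ‖s i‖ ε₁) - ‖s (i+1)‖))
        (by linarith : (0:ℝ) ≤ (max ‖s i‖ ε₁) + 2 * ‖s (i+1)‖)]
    have hy1' := mul_le_mul_of_nonneg_left hy1 hβ
    have hy2' := mul_le_mul_of_nonneg_left hy2 hα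
    rw [hxip]
    show (M/4 - L₂/6) * ‖s (i+1)‖^3 - (2*β/3 + α/6) * (max ‖s i‖ ε₁)^3
        - (β/3 + α/3) * ‖s (i+1)‖^3 ≤ f (x i) - f (x i + s (i+1))
    linarith [htay, hcub, hg', hH', hy1', hy2']
  -- telescoping sum
  have htel : ∑ i ∈ Finset.range (k+1), (f (x i) - f (x (i+1))) = f (x 0) - f (x (k+1)) :=
    Finset.sum_range_sub' (fun i => f (x i)) (k+1)
  have hsum1 : ∑ i ∈ Finset.range (k+1),
      ((M/4 - L₂/6) * gc (i+1) - (2*β/3 + α/6) * Q i - (β/3 + α/3) * gc (i+1))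
      ≤ f (x 0) - f (x (k+1)) := by
    rw [← htel]
    exact Finset.sum_le_sum fun i hi => hstep i (by
      have := Finset.mem_range.mp hi; omega)
  have hsum2 : (M/4 - L₂/6 - β/3 - α/3) * (∑ i ∈ Finset.range (k+1), gc (i+1))
      - (2*β/3 + α/6) * (∑ i ∈ Finset.range (k+1), Q i) ≤ f (x 0) - f (x (k+1)) := by
    rw [Finset.mul_sum, Finset.mul_sum, ← Finset.sum_sub_distrib]
    refine le_trans (le_of_eq (Finset.sum_congr rfl fun i _ => by ring)) hsum1
  -- rewrite shifted sum as S
  have hshift : ∑ i ∈ Finset.range (k+1), gc (i+1) = S := by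
    rw [hSdef]
    rw [show Finset.Icc 1 (k+1) = Finset.Ico 1 (k+2) from (Finset.Ico_add_one_right_eq_Icc 1 (k+1)).symm]
    rw [Finset.sum_Ico_eq_sum_range]
    rw [show k + 2 - 1 = k + 1 from rfl]
    exact Finset.sum_congr rfl fun i _ => by rw [Nat.add_comm]
  -- bound on sum of Q
  have hQ0 : Q 0 = ε₁^3 := by rw [hQ]; simp [hs0]
  have hT : ∑ i ∈ Finset.range (k+1), Q i ≤ 2 * ε₁^3 + 2 * S := by
    rcases Nat.eq_zero_or_pos k with hk | hk
    · subst hk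
      rw [show (0:ℕ) + 1 = 1 from rfl, Finset.sum_range_one, hQ0]
      nlinarith [pow_pos hε₁ 3, hS0]
    · have hQk : Q k = ε₁^3 := by
        have h1 : ‖s k‖ ≤ ε₁ := le_trans (le_max_left _ _) hterm
        rw [hQ]; simp only []; rw [max_eq_right h1]
      have hQb : ∀ i ∈ Finset.Ico 1 k, Q i ≤ gc i + gc (i+1) := by
        intro i hi
        have hi1 : 1 ≤ i := (Finset.mem_Ico.mp hi).1
        have hik : i ≤ k - 1 := by have := (Finset.mem_Ico.mp hi).2; omega
        rcases le_or_gt ε₁ ‖s i‖ with h | h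
        · rw [hQ]; simp only []; rw [max_eq_left h]
          have := hgcnn (i+1)
          simp only [hgc] at this ⊢
          linarith
        · rw [hQ]; simp only []; rw [max_eq_right h.le]
          rcases le_max_iff.mp (hnoterm i hi1 hik) with h2 | h2
          · simp only [hgc]
            have := pow_nonneg (norm_nonneg (s (i+1))) 3
            nlinarith [pow_le_pow_left₀ hε₁.le h2 3]
          · have h3 : ε₁^3 ≤ ‖s (i+1)‖^3 := pow_le_pow_left₀ hε₁.le h2 3
            simp only [hgc]
            have := pow_nonneg (norm_nonneg (s i)) 3
            linarith
      have e1 : ∑ i ∈ Finset.range (k+1), Q i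
          = (∑ i ∈ Finset.range k, Q i) + Q k := Finset.sum_range_succ Q k
      have e2 : ∑ i ∈ Finset.range k, Q i = Q 0 + ∑ i ∈ Finset.Ico 1 k, Q i := by
        rw [Finset.range_eq_Ico, Finset.sum_eq_sum_Ico_succ_bot hk]
      have e3 : ∑ i ∈ Finset.Ico 1 k, Q i
          ≤ ∑ i ∈ Finset.Ico 1 k, (gc i + gc (i+1)) := Finset.sum_le_sum hQb
      have e4 : ∑ i ∈ Finset.Ico 1 k, (gc i + gc (i+1))
          = (∑ i ∈ Finset.Ico 1 k, gc i) + ∑ i ∈ Finset.Ico 1 k, gc (i+1) :=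
        Finset.sum_add_distrib
      have e5 : ∑ i ∈ Finset.Ico 1 k, gc i ≤ S := by
        apply Finset.sum_le_sum_of_subset_of_nonneg
        · intro i hi
          simp only [Finset.mem_Ico] at hi
          simp only [Finset.mem_Icc]
          omega
        · exact fun i _ _ => hgcnn i
      have e6 : ∑ i ∈ Finset.Ico 1 k, gc (i+1) ≤ S := by
        have : ∑ i ∈ Finset.Ico 1 k, gc (i+1) = ∑ i ∈ Finset.Ico 2 (k+1), gc i := by
          rw [← Finset.sum_Ico_add' gc 1 k 1]
        rw [this]
        apply Finset.sum_le_sum_of_subset_of_nonneg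
        · intro i hi
          simp only [Finset.mem_Ico] at hi
          simp only [Finset.mem_Icc]
          omega
        · exact fun i _ _ => hgcnn i
      linarith
  -- final arithmetic
  have hD0 : 0 ≤ f (x 0) - fstar := by linarith [hbdd (x 0)]
  have hDk : f (x 0) - f (x (k+1)) ≤ f (x 0) - fstar := by linarith [hbdd (x (k+1))]
  rw [hshift] at hsum2
  set TT : ℝ := ∑ i ∈ Finset.range (k+1), Q i with hTT
  have hTT0 : 0 ≤ TT := Finset.sum_nonneg fun i _ =>
    pow_nonneg (le_trans hε₁.le (le_max_right _ _)) 3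
  have hc1 : (0:ℝ) ≤ 2*β/3 + α/6 := by linarith
  have h9 : (2*β/3 + α/6) * TT ≤ (2*β/3 + α/6) * (2 * ε₁^3 + 2 * S) :=
    mul_le_mul_of_nonneg_left hT hc1
  -- coefficient comparison
  have hcoef : γ ≤ M/4 - L₂/6 - β/3 - α/3 - 2*(2*β/3 + α/6) := by
    rw [hγdef] at hγ ⊢
    linarith
  have hmain : γ * S ≤ (f (x 0) - fstar) + (2*β + α + 2*γ) * ε₁^3 := by
    have h10 : γ * S ≤ (M/4 - L₂/6 - β/3 - α/3 - 2*(2*β/3 + α/6)) * S :=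
      mul_le_mul_of_nonneg_right hcoef hS0
    have h11 : (2*(2*β/3 + α/6)) * ε₁^3 ≤ (2*β + α + 2*γ) * ε₁^3 := by
      apply mul_le_mul_of_nonneg_right _ (by positivity)
      linarith
    nlinarith
  rw [le_div_iff₀ hγ]
  linarith [hmain]
end

section
/- (Matrix Hoeffding lemma) Let X be a random real symmetric d×d matrix such that E[X] = 0 and a·I ⪯ X ⪯ b·I almost surely, where a ≤ b are real constants and I is the d×d identity matrix. Then for every λ > 0, E[exp(λX)] ⪯ exp((1/8)λ²(b − a)²)·I, where exp denotes the matrix exponential and A ⪯ B means B − A is positive semidefinite. -/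
open MeasureTheory

section Helpers

open Matrix RealInnerProductSpace

/-- core inequality: for `0 ≤ p ≤ 1` and `h ≥ 0`, `1 - p + p * exp h ≤ exp (p*h + h^2/8)`. -/
lemma hoeff_core (p : ℝ) (hp : 0 ≤ p) (hp1 : p ≤ 1) (h : ℝ) (hh : 0 ≤ h) :
    1 - p + p * Real.exp h ≤ Real.exp (p * h + h ^ 2 / 8) := by
  set q : ℝ → ℝ := fun s => 1 - p + p * Real.exp s with hq
  have hqpos : ∀ s, 0 < q s := by
    intro s
    have h1 : 0 < 1 - p + p * 1 := by linarith
    rcases eq_or_lt_of_le hp with h0 | h0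
    · simp [hq, ← h0]
    · have hqs : q s = 1 - p + p * Real.exp s := rfl
      rw [hqs]
      nlinarith [Real.exp_pos s]
  -- φ s = p*s + s^2/8 - log (q s); show φ ≥ 0 on [0, ∞)
  set φ : ℝ → ℝ := fun s => p * s + s ^ 2 / 8 - Real.log (q s) with hφ
  have hqd : ∀ s, HasDerivAt q (p * Real.exp s) s := by
    intro s
    exact ((Real.hasDerivAt_exp s).const_mul p).const_add (1 - p)
  have hφd : ∀ s, HasDerivAt φ (p + s / 4 - p * Real.exp s / q s) s := by
    intro s
    have h1 : HasDerivAt (fun s : ℝ => p * s + s ^ 2 / 8) (p + 2 * s / 8) s := by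
      have h2 : HasDerivAt (fun x : ℝ => p * x) p s := by
        simpa using (hasDerivAt_id s).const_mul p
      have h3 : HasDerivAt (fun x : ℝ => x ^ 2 / 8) (2 * s / 8) s := by
        simpa using (hasDerivAt_pow 2 s).div_const 8
      exact h2.add h3
    have h3 : HasDerivAt (fun s => Real.log (q s)) (p * Real.exp s / q s) s :=
      (hqd s).log (hqpos s).ne'
    have := h1.sub h3
    exact this.congr_deriv (by ring)
  set ψ : ℝ → ℝ := fun s => p + s / 4 - p * Real.exp s / q s with hψ
  have hψd : ∀ s, HasDerivAt ψ (1 / 4 - p * Real.exp s * (1 - p) / (q s) ^ 2) s := by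
    intro s
    have h3 : HasDerivAt (fun s => p * Real.exp s / q s)
        ((p * Real.exp s * q s - p * Real.exp s * (p * Real.exp s)) / (q s) ^ 2) s :=
      ((Real.hasDerivAt_exp s).const_mul p).div (hqd s) (hqpos s).ne'
    have h4 : HasDerivAt (fun s : ℝ => p + s / 4) (1 / 4) s := by
      simpa using ((hasDerivAt_id s).div_const 4).const_add p
    have := h4.sub h3
    have hq' : q s = 1 - p + p * Real.exp s := rfl
    exact this.congr_deriv (by rw [hq']; ring)
  have hψnn : ∀ s ∈ Set.Ici (0 : ℝ), 0 ≤ ψ s := by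
    have hmono : MonotoneOn ψ (Set.Ici (0 : ℝ)) := by
      apply monotoneOn_of_deriv_nonneg (convex_Ici 0)
        (Continuous.continuousOn (by fun_prop (disch := intro s; exact (hqpos s).ne')))
      · intro s _
        exact (hψd s).differentiableAt.differentiableWithinAt
      · intro s _
        rw [(hψd s).deriv]
        have h1 : 0 < q s := hqpos s
        rw [sub_nonneg, div_le_iff₀ (by positivity)]
        have hqs : q s = (1 - p) + p * Real.exp s := rfl
        rw [hqs]
        nlinarith [sq_nonneg ((1 - p) - p * Real.exp s), Real.exp_pos s]
    intro s hs
    have h0 : ψ 0 = 0 := by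
      have : q 0 = 1 := by simp [hq]
      simp [hψ, this]
    calc 0 = ψ 0 := h0.symm
    _ ≤ ψ s := hmono (by simp) hs hs.out
  have hφnn : 0 ≤ φ h := by
    have hmono : MonotoneOn φ (Set.Ici (0 : ℝ)) := by
      apply monotoneOn_of_deriv_nonneg (convex_Ici 0)
        (Continuous.continuousOn (by fun_prop (disch := intro s; exact (hqpos s).ne')))
      · intro s _
        exact (hφd s).differentiableAt.differentiableWithinAt
      · intro s hs
        rw [(hφd s).deriv]
        exact hψnn s (interior_subset hs)
    have h0 : φ 0 = 0 := by
      have : q 0 = 1 := by simp [hq]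
      simp [hφ, this]
    calc 0 = φ 0 := h0.symm
    _ ≤ φ h := hmono (by simp) hh hh
  have hlog : Real.log (q h) ≤ p * h + h ^ 2 / 8 := by
    have h5 : φ h = p * h + h ^ 2 / 8 - Real.log (q h) := rfl
    rw [h5] at hφnn
    linarith
  calc q h = Real.exp (Real.log (q h)) := (Real.exp_log (hqpos h)).symm
  _ ≤ Real.exp (p * h + h ^ 2 / 8) := Real.exp_le_exp.mpr hlog

/-- Scalar Hoeffding: for `a ≤ 0 ≤ b`, `a < b`:
`(b e^a − a e^b)/(b−a) ≤ exp((b−a)²/8)`. -/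
lemma hoeff_scalar (a b : ℝ) (hab : a < b) (ha : a ≤ 0) (hb : 0 ≤ b) :
    (b * Real.exp a - a * Real.exp b) / (b - a) ≤ Real.exp ((b - a) ^ 2 / 8) := by
  have hba : (0:ℝ) < b - a := by linarith
  set p : ℝ := -a / (b - a) with hp
  have hp0 : 0 ≤ p := div_nonneg (by linarith) hba.le
  have hp1 : p ≤ 1 := by rw [hp, div_le_one hba]; linarith
  have hph : p * (b - a) = -a := by rw [hp]; field_simp
  have key := hoeff_core p hp0 hp1 (b - a) hba.le
  have e1 : a = -(p * (b - a)) := by rw [hph]; ring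
  have eb : Real.exp b = Real.exp a * Real.exp (b - a) := by
    rw [← Real.exp_add]; ring_nf
  have lhs_eq : b * Real.exp a - a * Real.exp b
      = Real.exp a * (1 - p + p * Real.exp (b - a)) * (b - a) := by
    rw [eb]
    linear_combination (Real.exp a - Real.exp a * Real.exp (b - a)) * hph
  rw [lhs_eq, mul_div_assoc, div_self hba.ne', mul_one]
  calc Real.exp a * (1 - p + p * Real.exp (b - a))
      ≤ Real.exp a * Real.exp (p * (b - a) + (b - a) ^ 2 / 8) :=
        mul_le_mul_of_nonneg_left key (Real.exp_pos _).le
  _ = Real.exp (a + (p * (b - a) + (b - a) ^ 2 / 8)) := (Real.exp_add _ _).symm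
  _ = Real.exp ((b - a) ^ 2 / 8) := by rw [hph]; ring_nf

variable {d : ℕ}

lemma exp_decomp (N : Matrix (Fin d) (Fin d) ℝ) (hN : N.IsHermitian) :
    NormedSpace.exp N = (hN.eigenvectorUnitary : Matrix (Fin d) (Fin d) ℝ) *
      Matrix.diagonal (fun i => Real.exp (hN.eigenvalues i)) *
      star (hN.eigenvectorUnitary : Matrix (Fin d) (Fin d) ℝ) := by
  set U : (Matrix (Fin d) (Fin d) ℝ)ˣ := Unitary.toUnits hN.eigenvectorUnitary with hU
  have hstar : star (hN.eigenvectorUnitary : Matrix (Fin d) (Fin d) ℝ) = ↑U⁻¹ := rfl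
  conv_lhs => rw [hN.spectral_theorem]
  rw [Unitary.conjStarAlgAut_apply]
  rw [hstar]
  rw [show ((hN.eigenvectorUnitary : Matrix (Fin d) (Fin d) ℝ)) = (↑U : Matrix (Fin d) (Fin d) ℝ) from rfl]
  rw [Matrix.exp_units_conj U _]
  congr 2
  rw [show (RCLike.ofReal ∘ hN.eigenvalues : Fin d → ℝ) = hN.eigenvalues by ext i; simp]
  rw [Matrix.exp_diagonal]
  rw [Pi.exp_def]
  ext i
  rw [← Real.exp_eq_exp_ℝ]

lemma unit_dotProduct (N : Matrix (Fin d) (Fin d) ℝ) (hN : N.IsHermitian) (i : Fin d) :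
    (⇑(hN.eigenvectorBasis i) : Fin d → ℝ) ⬝ᵥ (⇑(hN.eigenvectorBasis i) : Fin d → ℝ) = 1 := by
  have h1 : ‖hN.eigenvectorBasis i‖ = 1 := hN.eigenvectorBasis.orthonormal.1 i
  have h2 : (⟪hN.eigenvectorBasis i, hN.eigenvectorBasis i⟫ : ℝ) = 1 := by
    rw [real_inner_self_eq_norm_sq, h1]; norm_num
  rw [EuclideanSpace.inner_eq_star_dotProduct] at h2
  simpa using h2

lemma eig_le (N : Matrix (Fin d) (Fin d) ℝ) (hN : N.IsHermitian) (b : ℝ)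
    (h : (b • (1 : Matrix (Fin d) (Fin d) ℝ) - N).PosSemidef) (i : Fin d) :
    hN.eigenvalues i ≤ b := by
  have hq := h.dotProduct_mulVec_nonneg (⇑(hN.eigenvectorBasis i))
  rw [Matrix.sub_mulVec, Matrix.smul_mulVec, Matrix.one_mulVec,
    hN.mulVec_eigenvectorBasis] at hq
  simp only [star_trivial, dotProduct_sub, dotProduct_smul, smul_eq_mul] at hq
  rw [unit_dotProduct N hN i] at hq
  linarith

lemma le_eig (N : Matrix (Fin d) (Fin d) ℝ) (hN : N.IsHermitian) (a : ℝ)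
    (h : (N - a • (1 : Matrix (Fin d) (Fin d) ℝ)).PosSemidef) (i : Fin d) :
    a ≤ hN.eigenvalues i := by
  have hq := h.dotProduct_mulVec_nonneg (⇑(hN.eigenvectorBasis i))
  rw [Matrix.sub_mulVec, Matrix.smul_mulVec, Matrix.one_mulVec,
    hN.mulVec_eigenvectorBasis] at hq
  simp only [star_trivial, dotProduct_sub, dotProduct_smul, smul_eq_mul] at hq
  rw [unit_dotProduct N hN i] at hq
  linarith

/-- If `exp x ≤ c + e*x` on `[a,b]` and spectrum of Hermitian `N` lies in `[a,b]`,
then `c•1 + e•N - exp N ⪰ 0`. -/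
lemma matrix_exp_aff (N : Matrix (Fin d) (Fin d) ℝ) (hN : N.IsHermitian)
    (a b c e : ℝ)
    (h1 : (N - a • (1 : Matrix (Fin d) (Fin d) ℝ)).PosSemidef)
    (h2 : (b • (1 : Matrix (Fin d) (Fin d) ℝ) - N).PosSemidef)
    (haff : ∀ x : ℝ, a ≤ x → x ≤ b → Real.exp x ≤ c + e * x) :
    (c • (1 : Matrix (Fin d) (Fin d) ℝ) + e • N - NormedSpace.exp N).PosSemidef := by
  have hUU : (hN.eigenvectorUnitary : Matrix (Fin d) (Fin d) ℝ)
      * star (hN.eigenvectorUnitary : Matrix (Fin d) (Fin d) ℝ) = 1 :=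
    (Matrix.mem_unitaryGroup_iff).mp hN.eigenvectorUnitary.2
  have hN' : N = (hN.eigenvectorUnitary : Matrix (Fin d) (Fin d) ℝ)
      * Matrix.diagonal hN.eigenvalues * star (hN.eigenvectorUnitary : Matrix (Fin d) (Fin d) ℝ) := by
    conv_lhs => rw [hN.spectral_theorem]
    rw [Unitary.conjStarAlgAut_apply]
    rw [show (RCLike.ofReal ∘ hN.eigenvalues : Fin d → ℝ) = hN.eigenvalues by ext i; simp]
  have key : (hN.eigenvectorUnitary : Matrix (Fin d) (Fin d) ℝ)
      * (c • (1 : Matrix (Fin d) (Fin d) ℝ) + e • Matrix.diagonal hN.eigenvalues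
          - Matrix.diagonal (fun i => Real.exp (hN.eigenvalues i)))
      * star (hN.eigenvectorUnitary : Matrix (Fin d) (Fin d) ℝ)
      = c • (1 : Matrix (Fin d) (Fin d) ℝ) + e • N - NormedSpace.exp N := by
    simp only [mul_sub, sub_mul, mul_add, add_mul, Matrix.mul_smul, Matrix.smul_mul, mul_one]
    rw [hUU, ← hN', ← exp_decomp N hN]
  rw [← key]
  apply Matrix.PosSemidef.mul_mul_conjTranspose_same ?_
  have hdiag : c • (1 : Matrix (Fin d) (Fin d) ℝ) + e • Matrix.diagonal hN.eigenvalues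
      - Matrix.diagonal (fun i => Real.exp (hN.eigenvalues i))
      = Matrix.diagonal (fun i => c + e * hN.eigenvalues i - Real.exp (hN.eigenvalues i)) := by
    ext i j
    by_cases h : i = j <;>
      simp [Matrix.diagonal_apply, Matrix.one_apply, h]
  rw [hdiag]
  apply Matrix.PosSemidef.diagonal
  intro i
  simp only [Pi.zero_apply]
  have := haff (hN.eigenvalues i) (le_eig N hN a h1 i) (eig_le N hN b h2 i)
  linarith

/-- `exp` of a Hermitian real matrix is positive semidefinite. -/
lemma exp_posSemidef (N : Matrix (Fin d) (Fin d) ℝ) (hN : N.IsHermitian) :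
    (NormedSpace.exp N).PosSemidef := by
  rw [exp_decomp N hN]
  exact (Matrix.PosSemidef.diagonal fun i => (Real.exp_pos _).le).mul_mul_conjTranspose_same _

lemma entry_abs_le (M : Matrix (Fin d) (Fin d) ℝ) (hM : M.PosSemidef) (c : ℝ)
    (h2 : (c • (1 : Matrix (Fin d) (Fin d) ℝ) - M).PosSemidef) (i j : Fin d) :
    |M i j| ≤ c := by
  have hdiag : ∀ k : Fin d, 0 ≤ M k k ∧ M k k ≤ c := by
    intro k
    have ha := hM.dotProduct_mulVec_nonneg (Pi.single k 1)
    have hb := h2.dotProduct_mulVec_nonneg (Pi.single k 1)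
    simp only [star_trivial, Matrix.sub_mulVec, Matrix.smul_mulVec, Matrix.one_mulVec,
      Matrix.mulVec_single, MulOpposite.op_one, one_smul, Matrix.col_apply, dotProduct_sub, dotProduct_smul,
      single_dotProduct, smul_eq_mul, mul_one] at ha hb
    refine ⟨by simpa using ha, ?_⟩
    simp only [one_mul, Matrix.sub_apply, Matrix.smul_apply, Matrix.one_apply_eq,
      smul_eq_mul, mul_one] at hb
    linarith [hb]
  rcases eq_or_ne i j with rfl | hij
  · rw [abs_le]
    exact ⟨by linarith [(hdiag i).1, (hdiag i).2], (hdiag i).2⟩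
  · have hsym : M j i = M i j := by
      have h := congrFun (congrFun hM.1 i) j
      simpa [Matrix.conjTranspose_apply] using h
    have hplus := hM.dotProduct_mulVec_nonneg (Pi.single i 1 + Pi.single j 1)
    have hminus := hM.dotProduct_mulVec_nonneg (Pi.single i 1 - Pi.single j 1)
    simp only [star_trivial, Matrix.mulVec_add, Matrix.mulVec_sub, Matrix.mulVec_single, MulOpposite.op_one, one_smul, Matrix.col_apply,
      add_dotProduct, sub_dotProduct, dotProduct_add,
      dotProduct_sub, single_dotProduct, Pi.add_apply, Pi.sub_apply,
      mul_one, one_mul] at hplus hminus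
    rw [abs_le]
    constructor
    · nlinarith [(hdiag i).2, (hdiag j).2, hplus, hsym]
    · nlinarith [(hdiag i).2, (hdiag j).2, hminus, hsym]

noncomputable local instance matrixMeasurableSpace :
    MeasurableSpace (Matrix (Fin d) (Fin d) ℝ) :=
  MeasurableSpace.pi (m := fun _ : Fin d => MeasurableSpace.pi)

lemma exp_entry_measurable {Ω : Type*} [MeasurableSpace Ω]
    (Y : Ω → Matrix (Fin d) (Fin d) ℝ) (hmeas : ∀ i j, Measurable fun ω => Y ω i j)
    (i j : Fin d) : Measurable fun ω => NormedSpace.exp (Y ω) i j := by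
  have hb : BorelSpace (Matrix (Fin d) (Fin d) ℝ) := Pi.borelSpace
  have h : Continuous fun M : Matrix (Fin d) (Fin d) ℝ => NormedSpace.exp M := by
    letI : NormedAddCommGroup (Matrix (Fin d) (Fin d) ℝ) := Matrix.linftyOpNormedAddCommGroup
    letI : NormedRing (Matrix (Fin d) (Fin d) ℝ) := Matrix.linftyOpNormedRing
    letI : NormedAlgebra ℝ (Matrix (Fin d) (Fin d) ℝ) := Matrix.linftyOpNormedAlgebra
    letI : NormedAlgebra ℚ (Matrix (Fin d) (Fin d) ℝ) := Matrix.linftyOpNormedAlgebra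
    exact NormedSpace.exp_continuous
  have hY : Measurable Y :=
    measurable_pi_lambda _ fun i => measurable_pi_lambda _ fun j => hmeas i j
  exact (((continuous_apply _).comp ((continuous_apply _).comp h)).measurable).comp hY

lemma quad_expand (M : Matrix (Fin d) (Fin d) ℝ) (v : Fin d → ℝ) :
    v ⬝ᵥ (M *ᵥ v) = ∑ i, ∑ j, v i * (M i j * v j) := by
  simp [dotProduct, Matrix.mulVec, Finset.mul_sum]

end Helpers

open Matrix in
/-- Matrix Hoeffding lemma: if `X` is a random real symmetric `d×d` matrix
with `E[X] = 0` (entrywise) and `a·I ⪯ X ⪯ b·I` almost surely, then for every `λ > 0`,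
`E[exp(λX)] ⪯ exp((1/8)λ²(b − a)²)·I` in the positive-semidefinite order, where `exp` of a
matrix is the matrix exponential and expectation is entrywise. -/
theorem stmt12 {Ω : Type*} [MeasurableSpace Ω] (μ : Measure Ω) [IsProbabilityMeasure μ]
    (d : ℕ) (X : Ω → Matrix (Fin d) (Fin d) ℝ)
    (hmeas : ∀ i j, Measurable fun ω => X ω i j)
    (hsym : ∀ ω, (X ω).IsSymm)
    (a b : ℝ) (hab : a ≤ b)
    (hmean : ∀ i j, ∫ ω, X ω i j ∂μ = 0)
    (hbound : ∀ᵐ ω ∂μ,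
      (X ω - a • (1 : Matrix (Fin d) (Fin d) ℝ)).PosSemidef ∧
      (b • (1 : Matrix (Fin d) (Fin d) ℝ) - X ω).PosSemidef)
    (l : ℝ) (hl : 0 < l) :
    (Real.exp (1 / 8 * l ^ 2 * (b - a) ^ 2) • (1 : Matrix (Fin d) (Fin d) ℝ)
      - Matrix.of fun i j => ∫ ω, NormedSpace.exp (l • X ω) i j ∂μ).PosSemidef := by
  classical
  rcases Nat.eq_zero_or_pos d with hd0 | hd
  · subst hd0
    refine Matrix.PosSemidef.of_dotProduct_mulVec_nonneg ?_ ?_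
    · ext i j
      exact i.elim0
    · intro x
      simp [dotProduct]
  have i0 : Fin d := ⟨0, hd⟩
  -- symmetric matrices are Hermitian over ℝ
  have hherm : ∀ ω, (X ω).IsHermitian := fun ω => by
    rw [Matrix.IsHermitian, Matrix.conjTranspose_eq_transpose_of_trivial]
    exact hsym ω
  -- entries of X are a.e. bounded, hence integrable
  have hXbd : ∀ᵐ ω ∂μ, ∀ i j, |X ω i j| ≤ (b - a) + |a| := by
    filter_upwards [hbound] with ω hω
    intro i j
    have hM : (X ω - a • 1).PosSemidef := hω.1
    have hM2 : ((b - a) • (1 : Matrix (Fin d) (Fin d) ℝ) - (X ω - a • 1)).PosSemidef := by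
      have heq : (b - a) • (1 : Matrix (Fin d) (Fin d) ℝ) - (X ω - a • 1)
          = b • 1 - X ω := by rw [sub_smul]; abel
      rw [heq]; exact hω.2
    have habs := entry_abs_le _ hM (b - a) hM2 i j
    have h1a : |(a • (1 : Matrix (Fin d) (Fin d) ℝ)) i j| ≤ |a| := by
      by_cases h : i = j <;> simp [Matrix.smul_apply, Matrix.one_apply, h, abs_nonneg]
    calc |X ω i j| = |(X ω - a • 1) i j + (a • (1 : Matrix (Fin d) (Fin d) ℝ)) i j| := by
          congr 1
          simp [Matrix.sub_apply]
    _ ≤ |(X ω - a • 1) i j| + |(a • (1 : Matrix (Fin d) (Fin d) ℝ)) i j| := abs_add_le _ _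
    _ ≤ (b - a) + |a| := add_le_add habs h1a
  have hXint : ∀ i j, Integrable (fun ω => X ω i j) μ := fun i j =>
    Integrable.mono' (integrable_const ((b - a) + |a|)) (hmeas i j).aestronglyMeasurable
      (hXbd.mono fun ω h => by simpa [Real.norm_eq_abs] using h i j)
  -- a ≤ 0 ≤ b
  have haei : ∀ᵐ ω ∂μ, a ≤ X ω i0 i0 ∧ X ω i0 i0 ≤ b := by
    filter_upwards [hbound] with ω hω
    have h1 := hω.1.dotProduct_mulVec_nonneg (Pi.single i0 1)
    have h2 := hω.2.dotProduct_mulVec_nonneg (Pi.single i0 1)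
    simp only [star_trivial, Matrix.sub_mulVec, Matrix.smul_mulVec, Matrix.one_mulVec,
      Matrix.mulVec_single, MulOpposite.op_one, one_smul, Matrix.col_apply, dotProduct_sub, dotProduct_smul,
      single_dotProduct, smul_eq_mul, mul_one, one_mul] at h1 h2
    constructor
    · have := h1
      simp only [Matrix.sub_apply, Matrix.smul_apply, Matrix.one_apply_eq, smul_eq_mul,
        mul_one] at this ⊢
      nlinarith [this]
    · have := h2
      simp only [Matrix.sub_apply, Matrix.smul_apply, Matrix.one_apply_eq, smul_eq_mul,
        mul_one] at this ⊢
      nlinarith [this]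
  have ha0 : a ≤ 0 := by
    have h1 : ∫ _ω, a ∂μ ≤ ∫ ω, X ω i0 i0 ∂μ :=
      integral_mono_ae (integrable_const a) (hXint i0 i0) (haei.mono fun ω h => h.1)
    rw [hmean i0 i0, integral_const] at h1
    simpa [measure_univ] using h1
  have hb0 : 0 ≤ b := by
    have h1 : ∫ ω, X ω i0 i0 ∂μ ≤ ∫ _ω, b ∂μ :=
      integral_mono_ae (hXint i0 i0) (integrable_const b) (haei.mono fun ω h => h.2)
    rw [hmean i0 i0, integral_const] at h1
    simpa [measure_univ] using h1
  rcases eq_or_lt_of_le hab with heq | hlt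
  · -- degenerate case: a = b forces a = b = 0 and X = 0 a.e.
    have ha' : a = 0 := le_antisymm ha0 (heq ▸ hb0)
    have hb' : b = 0 := by rw [← heq, ha']
    subst ha'
    subst hb'
    have hXzero : ∀ᵐ ω ∂μ, X ω = 0 := by
      filter_upwards [hbound] with ω hω
      have h1 : (X ω).PosSemidef := by simpa using hω.1
      have h2 : ((0:ℝ) • (1 : Matrix (Fin d) (Fin d) ℝ) - X ω).PosSemidef := hω.2
      ext i j
      have habs := entry_abs_le _ h1 0 h2 i j
      have := abs_nonneg (X ω i j)
      have : |X ω i j| = 0 := le_antisymm habs this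
      simpa [abs_eq_zero] using this
    have hofeq : (Matrix.of fun i j => ∫ ω, NormedSpace.exp (l • X ω) i j ∂μ)
        = (1 : Matrix (Fin d) (Fin d) ℝ) := by
      ext i j
      have hint : (fun ω => NormedSpace.exp (l • X ω) i j)
          =ᵐ[μ] fun _ => (1 : Matrix (Fin d) (Fin d) ℝ) i j := by
        filter_upwards [hXzero] with ω hω
        rw [hω, smul_zero, NormedSpace.exp_zero]
      rw [Matrix.of_apply, integral_congr_ae hint, integral_const]
      simp [measure_univ]
    rw [hofeq]
    have hc1 : Real.exp (1 / 8 * l ^ 2 * ((0:ℝ) - 0) ^ 2) = 1 := by norm_num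
    rw [hc1, one_smul, sub_self]
    refine Matrix.PosSemidef.of_dotProduct_mulVec_nonneg ?_ ?_
    · ext i j
      simp
    · intro x
      simp
  -- main case : a < b
  set a' := l * a with ha'def
  set b' := l * b with hb'def
  have hab' : a' < b' := by
    rw [ha'def, hb'def]
    exact mul_lt_mul_of_pos_left hlt hl
  have hba' : (0:ℝ) < b' - a' := by linarith
  set c₀ := (b' * Real.exp a' - a' * Real.exp b') / (b' - a') with hc₀def
  set e₀ := (Real.exp b' - Real.exp a') / (b' - a') with he₀def
  have haff : ∀ x : ℝ, a' ≤ x → x ≤ b' → Real.exp x ≤ c₀ + e₀ * x := by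
    intro x hx1 hx2
    have hθ : ((b' - x)/(b' - a')) • a' + ((x - a')/(b' - a')) • b' = x := by
      rw [smul_eq_mul, smul_eq_mul]
      field_simp
      ring
    have hcx := convexOn_exp.2 (Set.mem_univ a') (Set.mem_univ b')
      (show (0:ℝ) ≤ (b' - x) / (b' - a') from div_nonneg (by linarith) hba'.le)
      (show (0:ℝ) ≤ (x - a') / (b' - a') from div_nonneg (by linarith) hba'.le)
      (show (b' - x) / (b' - a') + (x - a') / (b' - a') = 1 by field_simp; ring)
    rw [hθ] at hcx
    calc Real.exp x ≤ ((b' - x)/(b' - a')) • Real.exp a' + ((x - a')/(b' - a')) • Real.exp b' :=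
          hcx
    _ = c₀ + e₀ * x := by
        rw [smul_eq_mul, smul_eq_mul, hc₀def, he₀def]
        field_simp
        ring
  have hcb : c₀ ≤ Real.exp (1 / 8 * l ^ 2 * (b - a) ^ 2) := by
    have h := hoeff_scalar a' b' hab'
      (by rw [ha'def]; exact mul_nonpos_of_nonneg_of_nonpos hl.le ha0)
      (by rw [hb'def]; exact mul_nonneg hl.le hb0)
    have heq : (b' - a') ^ 2 / 8 = 1 / 8 * l ^ 2 * (b - a) ^ 2 := by
      rw [hb'def, ha'def]; ring
    rwa [heq] at h
  -- a.e. matrix inequalities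
  have hkey : ∀ᵐ ω ∂μ,
      (c₀ • (1 : Matrix (Fin d) (Fin d) ℝ) + e₀ • (l • X ω)
        - NormedSpace.exp (l • X ω)).PosSemidef
      ∧ (NormedSpace.exp (l • X ω)).PosSemidef
      ∧ (Real.exp b' • (1 : Matrix (Fin d) (Fin d) ℝ)
        - NormedSpace.exp (l • X ω)).PosSemidef := by
    filter_upwards [hbound] with ω hω
    have hH : (l • X ω).IsHermitian := by
      rw [Matrix.IsHermitian, Matrix.conjTranspose_eq_transpose_of_trivial]
      ext i j
      have := congrFun (congrFun (hsym ω) i) j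
      simp only [Matrix.transpose_apply] at this ⊢
      simp [Matrix.smul_apply, this]
    have hP1 : (l • X ω - a' • (1 : Matrix (Fin d) (Fin d) ℝ)).PosSemidef := by
      have hps : (l • (X ω - a • (1 : Matrix (Fin d) (Fin d) ℝ))).PosSemidef := by
        refine Matrix.PosSemidef.of_dotProduct_mulVec_nonneg ?_ ?_
        · rw [Matrix.IsHermitian, Matrix.conjTranspose_smul]
          rw [hω.1.isHermitian.eq]
          simp
        · intro x
          have := hω.1.dotProduct_mulVec_nonneg x
          rw [Matrix.smul_mulVec, dotProduct_smul, smul_eq_mul]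
          exact mul_nonneg hl.le this
      have heq : l • (X ω - a • (1 : Matrix (Fin d) (Fin d) ℝ))
          = l • X ω - a' • (1 : Matrix (Fin d) (Fin d) ℝ) := by
        rw [smul_sub, smul_smul, ha'def]
      rwa [heq] at hps
    have hP2 : (b' • (1 : Matrix (Fin d) (Fin d) ℝ) - l • X ω).PosSemidef := by
      have hps : (l • (b • (1 : Matrix (Fin d) (Fin d) ℝ) - X ω)).PosSemidef := by
        refine Matrix.PosSemidef.of_dotProduct_mulVec_nonneg ?_ ?_
        · rw [Matrix.IsHermitian, Matrix.conjTranspose_smul]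
          rw [hω.2.isHermitian.eq]
          simp
        · intro x
          have := hω.2.dotProduct_mulVec_nonneg x
          rw [Matrix.smul_mulVec, dotProduct_smul, smul_eq_mul]
          exact mul_nonneg hl.le this
      have heq : l • (b • (1 : Matrix (Fin d) (Fin d) ℝ) - X ω)
          = b' • (1 : Matrix (Fin d) (Fin d) ℝ) - l • X ω := by
        rw [smul_sub, smul_smul, hb'def]
      rwa [heq] at hps
    refine ⟨matrix_exp_aff _ hH a' b' c₀ e₀ hP1 hP2 haff, exp_posSemidef _ hH, ?_⟩
    have h := matrix_exp_aff _ hH a' b' (Real.exp b') 0 hP1 hP2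
      (fun x _ hx2 => by simpa using Real.exp_le_exp.mpr hx2)
    simpa using h
  -- integrability of exp entries
  have hexpmeas : ∀ i j, Measurable fun ω => NormedSpace.exp (l • X ω) i j := by
    intro i j
    exact exp_entry_measurable (fun ω => l • X ω)
      (fun i j => (hmeas i j).const_mul l) i j
  have hexpint : ∀ i j, Integrable (fun ω => NormedSpace.exp (l • X ω) i j) μ := by
    intro i j
    refine Integrable.mono' (integrable_const (Real.exp b'))
      (hexpmeas i j).aestronglyMeasurable ?_
    filter_upwards [hkey] with ω hω
    rw [Real.norm_eq_abs]
    exact entry_abs_le _ hω.2.1 _ hω.2.2 i j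
  refine Matrix.PosSemidef.of_dotProduct_mulVec_nonneg ?_ ?_
  · -- Hermitian
    have hsye : ∀ ω (i j : Fin d),
        NormedSpace.exp (l • X ω) j i = NormedSpace.exp (l • X ω) i j := by
      intro ω i j
      have hH : (l • X ω).IsHermitian := by
        rw [Matrix.IsHermitian, Matrix.conjTranspose_eq_transpose_of_trivial]
        ext i j
        have := congrFun (congrFun (hsym ω) i) j
        simp only [Matrix.transpose_apply] at this ⊢
        simp [Matrix.smul_apply, this]
      have h1 : (NormedSpace.exp (l • X ω)).IsHermitian := by
        rw [Matrix.IsHermitian, ← Matrix.exp_conjTranspose, hH.eq]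
      have := congrFun (congrFun h1.eq i) j
      simpa [Matrix.conjTranspose_apply] using this
    ext i j
    simp only [Matrix.conjTranspose_apply, Matrix.sub_apply, Matrix.smul_apply,
      Matrix.of_apply, star_trivial, smul_eq_mul]
    congr 1
    · rw [Matrix.one_apply, Matrix.one_apply]
      by_cases h : i = j
      · simp [h]
      · simp [h, Ne.symm h]
    · exact integral_congr_ae (Filter.Eventually.of_forall fun ω => hsye ω i j)
  · -- quadratic form
    intro v
    rw [star_trivial, Matrix.sub_mulVec, Matrix.smul_mulVec, Matrix.one_mulVec,
      dotProduct_sub, dotProduct_smul, smul_eq_mul]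
    have hvv : (0:ℝ) ≤ v ⬝ᵥ v :=
      Finset.sum_nonneg fun i _ => mul_self_nonneg _
    -- the integrand as a function
    have hgexpand : ∀ ω, v ⬝ᵥ (NormedSpace.exp (l • X ω) *ᵥ v)
        = ∑ i, ∑ j, v i * (NormedSpace.exp (l • X ω) i j * v j) :=
      fun ω => quad_expand _ v
    have hgint : Integrable (fun ω => v ⬝ᵥ (NormedSpace.exp (l • X ω) *ᵥ v)) μ := by
      rw [show (fun ω => v ⬝ᵥ (NormedSpace.exp (l • X ω) *ᵥ v))
          = fun ω => ∑ i, ∑ j, v i * (NormedSpace.exp (l • X ω) i j * v j) from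
        funext hgexpand]
      exact integrable_finset_sum _ fun i _ => integrable_finset_sum _ fun j _ =>
        (((hexpint i j).mul_const _).const_mul _)
    have hexpand : v ⬝ᵥ ((Matrix.of fun i j => ∫ ω, NormedSpace.exp (l • X ω) i j ∂μ) *ᵥ v)
        = ∫ ω, v ⬝ᵥ (NormedSpace.exp (l • X ω) *ᵥ v) ∂μ := by
      rw [quad_expand]
      rw [show (fun ω => v ⬝ᵥ (NormedSpace.exp (l • X ω) *ᵥ v))
          = fun ω => ∑ i, ∑ j, v i * (NormedSpace.exp (l • X ω) i j * v j) from
        funext hgexpand]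
      rw [integral_finset_sum _ fun i _ => integrable_finset_sum _ fun j _ =>
        (((hexpint i j).mul_const _).const_mul _)]
      refine Finset.sum_congr rfl fun i _ => ?_
      rw [integral_finset_sum _ fun j _ => (((hexpint i j).mul_const _).const_mul _)]
      refine Finset.sum_congr rfl fun j _ => ?_
      rw [integral_const_mul, integral_mul_const]
      simp [Matrix.of_apply]
    -- the linear part integrates to zero
    have hqXint : Integrable (fun ω => v ⬝ᵥ ((l • X ω) *ᵥ v)) μ := by
      rw [show (fun ω => v ⬝ᵥ ((l • X ω) *ᵥ v))
          = fun ω => ∑ i, ∑ j, v i * (l * X ω i j * v j) from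
        funext fun ω => quad_expand _ v]
      exact integrable_finset_sum _ fun i _ => integrable_finset_sum _ fun j _ =>
        ((((hXint i j).const_mul l).mul_const _).const_mul _)
    have hqXzero : ∫ ω, v ⬝ᵥ ((l • X ω) *ᵥ v) ∂μ = 0 := by
      rw [show (fun ω => v ⬝ᵥ ((l • X ω) *ᵥ v))
          = fun ω => ∑ i, ∑ j, v i * (l * X ω i j * v j) from
        funext fun ω => quad_expand _ v]
      rw [integral_finset_sum _ fun i _ => integrable_finset_sum _ fun j _ =>
        ((((hXint i j).const_mul l).mul_const _).const_mul _)]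
      refine Finset.sum_eq_zero fun i _ => ?_
      rw [integral_finset_sum _ fun j _ =>
        ((((hXint i j).const_mul l).mul_const _).const_mul _)]
      refine Finset.sum_eq_zero fun j _ => ?_
      rw [integral_const_mul, integral_mul_const, integral_const_mul, hmean i j]
      ring
    -- a.e. bound on the quadratic form
    have haeq : ∀ᵐ ω ∂μ, v ⬝ᵥ (NormedSpace.exp (l • X ω) *ᵥ v)
        ≤ c₀ * (v ⬝ᵥ v) + e₀ * (v ⬝ᵥ ((l • X ω) *ᵥ v)) := by
      filter_upwards [hkey] with ω hω
      have h := hω.1.dotProduct_mulVec_nonneg v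
      rw [star_trivial, Matrix.sub_mulVec, Matrix.add_mulVec, Matrix.smul_mulVec,
        Matrix.smul_mulVec, Matrix.one_mulVec, dotProduct_sub,
        dotProduct_add, dotProduct_smul, dotProduct_smul,
        smul_eq_mul, smul_eq_mul] at h
      linarith
    have hrint : Integrable (fun ω => c₀ * (v ⬝ᵥ v) + e₀ * (v ⬝ᵥ ((l • X ω) *ᵥ v))) μ :=
      (integrable_const _).add (hqXint.const_mul _)
    have hle := integral_mono_ae hgint hrint haeq
    rw [integral_add (integrable_const _) (hqXint.const_mul _), integral_const,
      integral_const_mul, hqXzero, mul_zero, add_zero, probReal_univ] at hle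
    simp only [ENNReal.toReal_one, smul_eq_mul, one_mul] at hle
    rw [hexpand]
    have hfin : c₀ * (v ⬝ᵥ v) ≤ Real.exp (1 / 8 * l ^ 2 * (b - a) ^ 2) * (v ⬝ᵥ v) :=
      mul_le_mul_of_nonneg_right hcb hvv
    linarith
end

section
/- For all integers n, N with 1 ≤ n < N, the following inequality holds: ∑_{t=1}^{n} 1/(N − t)² ≤ (n/(N − n)²)·(1 − (n − 1)/N). -/
/-! Induction on `n`, for any real `N > n`: adding the next term `1 / (N - n - 1) ^ 2` to the bound
for `n` falls short of the bound for `n + 1` by exactly `n / (N (N - n - 1) (N - n) ^ 2) ≥ 0`. -/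

open Finset

lemma bound_add_inv_sub_sq_le {N y : ℝ} (hy : 0 ≤ y) (h : y + 1 < N) :
    y / (N - y) ^ 2 * (1 - (y - 1) / N) + 1 / (N - (y + 1)) ^ 2
      ≤ (y + 1) / (N - (y + 1)) ^ 2 * (1 - (y + 1 - 1) / N) := by
  have hN : 0 < N := by linarith
  have h₁ : 0 < N - (y + 1) := by linarith
  have h₀ : 0 < N - y := by linarith
  have hgap : (y + 1) / (N - (y + 1)) ^ 2 * (1 - (y + 1 - 1) / N)
      - (y / (N - y) ^ 2 * (1 - (y - 1) / N) + 1 / (N - (y + 1)) ^ 2)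
      = y / (N * (N - (y + 1)) * (N - y) ^ 2) := by
    field_simp
    ring
  have : 0 ≤ y / (N * (N - (y + 1)) * (N - y) ^ 2) := by positivity
  linarith

lemma sum_Icc_one_div_sub_sq_le {N : ℝ} {n : ℕ} (hn : (n : ℝ) < N) :
    ∑ t ∈ Icc 1 n, 1 / (N - t) ^ 2 ≤ n / (N - n) ^ 2 * (1 - (n - 1) / N) := by
  induction n with
  | zero => simp
  | succ n ih =>
    rw [sum_Icc_succ_top (Nat.le_add_left 1 n)]
    push_cast at hn ⊢
    calc ∑ t ∈ Icc 1 n, 1 / (N - t) ^ 2 + 1 / (N - (n + 1)) ^ 2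
        ≤ n / (N - n) ^ 2 * (1 - (n - 1) / N) + 1 / (N - (n + 1)) ^ 2 := by
          gcongr
          exact ih (by linarith)
      _ ≤ (n + 1) / (N - (n + 1)) ^ 2 * (1 - (n + 1 - 1) / N) :=
          bound_add_inv_sub_sq_le n.cast_nonneg hn

theorem stmt13_general (n N : ℕ) (hnN : n < N) :
    ∑ t ∈ Finset.Icc 1 n, (1 : ℝ) / ((N : ℝ) - (t : ℝ)) ^ 2
      ≤ (n : ℝ) / ((N : ℝ) - (n : ℝ)) ^ 2 * (1 - ((n : ℝ) - 1) / (N : ℝ)) :=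
  sum_Icc_one_div_sub_sq_le (by exact_mod_cast hnN)

/-- for integers `1 ≤ n < N`,
`∑_{t=1}^{n} 1/(N − t)² ≤ (n/(N − n)²)(1 − (n − 1)/N)`. -/
theorem stmt13 (n N : ℕ) (hn : 1 ≤ n) (hnN : n < N) :
    ∑ t ∈ Finset.Icc 1 n, (1 : ℝ) / ((N : ℝ) - (t : ℝ)) ^ 2
      ≤ (n : ℝ) / ((N : ℝ) - (n : ℝ)) ^ 2 * (1 - ((n : ℝ) - 1) / (N : ℝ)) :=
  stmt13_general n N hnN
end

section
/- (Theorem 2, gradient part) Let f₁, …, f_N : ℝ^d → ℝ be continuously differentiable with each gradient ∇f_i being L₁-Lipschitz, and let F := (1/N)∑_{i=1}^N f_i. Fix x, x̃ ∈ ℝ^d, a vector s ∈ ℝ^d, ε₁ > 0, β > 0, and 0 < ζ < 1. Let i₁, …, i_n be independent indices each uniform on {1, …, N} (sampling with replacement), and define the variance-reduced gradient estimate g := (1/n)∑_{j=1}^{n}(∇f_{i_j}(x) − ∇f_{i_j}(x̃)) + ∇F(x̃). If n ≥ ( (8L₁²/(β²·max{‖s‖⁴, ε₁⁴}))·‖x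 − x̃‖² + (4L₁/(3β·max{‖s‖², ε₁²}))·‖x − x̃‖ )·log(2(d+1)/ζ), then with probability at least 1 − ζ, ‖g − ∇F(x)‖ ≤ β·max{‖s‖², ε₁²}. -/
/-!
Put `Δᵢ = ∇fᵢ(x) - ∇fᵢ(x̃)`, `b = (1/N) ∑ᵢ Δᵢ` and `vᵢ = Δᵢ - b`. Then `‖Δᵢ‖ ≤ ρ := L₁ ‖x - x̃‖`,
the `vᵢ` are centred, and the error of the estimate is the sample mean `(1/n) ∑ⱼ v_{ι j}`.

The function `ι ↦ ‖∑ⱼ v_{ι j}‖` of the index tuple has bounded differences: exposing the indices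
one at a time, each conditional increment ranges over an interval of length `2ρ`, so Hoeffding's
lemma and induction on the number of indices bound its centred moment generating function by
`exp (n ρ² λ² / 2)` (McDiarmid's argument). Its mean is at most `√n ρ` by the second-moment identity
`E ‖∑ⱼ v_{ι j}‖² = n E ‖v‖²`. Chernoff's bound then shows that at most a fraction
`exp (-t² / (2 n ρ²))` of the tuples have `‖∑ⱼ v_{ι j}‖ > √n ρ + t`. For `t = n P - √n ρ`, where
`P = β max (‖s‖², ε₁²)`, the sample size makes this at most `ζ`.
-/

open Real Finset MeasureTheory ProbabilityTheory

theorem sum_exp_mul_sub_average_le_of_mem_Icc {α : Type*} [Fintype α] [Nonempty α] (h : α → ℝ)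
    {a b : ℝ} (hab : ∀ i, h i ∈ Set.Icc a b) (l : ℝ) :
    ∑ i, exp (l * (h i - (∑ j, h j) / Fintype.card α))
      ≤ Fintype.card α * exp ((b - a) ^ 2 * l ^ 2 / 8) := by
  let _ : MeasurableSpace α := ⊤
  let μ := (PMF.uniformOfFintype α).toMeasure
  have hK : (0 : ℝ) < Fintype.card α := by exact_mod_cast Fintype.card_pos
  have integral_eq (g : α → ℝ) : ∫ i, g i ∂μ = (∑ i, g i) / Fintype.card α := by
    simp [μ, PMF.integral_eq_sum, PMF.uniformOfFintype_apply, Finset.mul_sum, div_eq_inv_mul]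
  have hoeffding := (hasSubgaussianMGF_of_mem_Icc (μ := μ) (by fun_prop)
    (Filter.Eventually.of_forall hab)).mgf_le l
  rw [mgf, integral_eq, integral_eq, div_le_iff₀ hK] at hoeffding
  refine hoeffding.trans_eq ?_
  rw [mul_comm]
  congr 2
  push_cast
  rw [norm_eq_abs, div_pow, sq_abs]
  ring

theorem Fintype.sum_fin_succ_pi {α M : Type*} [Fintype α] [AddCommMonoid M] (m : ℕ)
    (F : (Fin (m + 1) → α) → M) :
    ∑ ι, F ι = ∑ a, ∑ ι : Fin m → α, F (Fin.cons a ι) := by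
  rw [← (Fin.consEquiv fun _ => α).sum_comp, Fintype.sum_prod_type]
  rfl

theorem Fin.sum_comp_cons {α M : Type*} [AddCommMonoid M] (v : α → M) {m : ℕ} (a : α)
    (ι : Fin m → α) :
    ∑ j, v ((Fin.cons a ι : Fin (m + 1) → α) j) = v a + ∑ j, v (ι j) := by
  simp [Fin.sum_univ_succ]

theorem card_mul_sum_sq_norm_sum_comp {α E : Type*} [Fintype α] [NormedAddCommGroup E]
    [InnerProductSpace ℝ E] (v : α → E) (hv : ∑ i, v i = 0) (m : ℕ) :
    Fintype.card α * ∑ ι : Fin m → α, ‖∑ j, v (ι j)‖ ^ 2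
      = m * Fintype.card α ^ m * ∑ i, ‖v i‖ ^ 2 := by
  induction m with
  | zero => simp
  | succ m ih =>
    have hcross : ∑ a, ∑ ι : Fin m → α, inner ℝ (v a) (∑ j, v (ι j)) = 0 := by
      rw [sum_comm]; simp [← sum_inner, hv]
    rw [Fintype.sum_fin_succ_pi]
    have hcons (a : α) (ι : Fin m → α) :
        ‖∑ j, v ((Fin.cons a ι : Fin (m + 1) → α) j)‖ ^ 2
          = ‖v a‖ ^ 2 + 2 * inner ℝ (v a) (∑ j, v (ι j)) + ‖∑ j, v (ι j)‖ ^ 2 := by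
      rw [Fin.sum_univ_succ, Fin.cons_zero]
      simp only [Fin.cons_succ]
      exact norm_add_sq_real _ _
    simp only [hcons, sum_add_distrib, ← mul_sum, hcross]
    simp only [sum_const, card_univ, Fintype.card_fun, Fintype.card_fin, nsmul_eq_mul]
    rw [← mul_sum, mul_add, mul_add, ih]
    push_cast
    ring

section Sampling

variable {α E : Type*} [Fintype α] [Nonempty α] [NormedAddCommGroup E]

theorem LipschitzWith.average_comp_add (Φ : E → ℝ) (hΦ : LipschitzWith 1 Φ) (v : α → E) :
    LipschitzWith 1 fun y => (∑ a, Φ (y + v a)) / Fintype.card α := by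
  have hK : (0 : ℝ) < Fintype.card α := by exact_mod_cast Fintype.card_pos
  refine LipschitzWith.of_dist_le_mul fun y y' => ?_
  rw [NNReal.coe_one, one_mul, Real.dist_eq, dist_eq_norm, ← sub_div, abs_div, abs_of_pos hK,
    div_le_iff₀ hK, ← sum_sub_distrib]
  calc |∑ a, (Φ (y + v a) - Φ (y' + v a))| ≤ ∑ a, |Φ (y + v a) - Φ (y' + v a)| :=
        abs_sum_le_sum_abs _ _
    _ ≤ ∑ _a : α, ‖y - y'‖ := sum_le_sum fun a _ => by
        simpa [dist_eq_norm] using hΦ.dist_le_mul (y + v a) (y' + v a)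
    _ = ‖y - y'‖ * Fintype.card α := by simp [mul_comm]

theorem sum_exp_lipschitz_sub_average_le (v : α → E) (w : E) {ρ : ℝ} (hv : ∀ i, ‖v i - w‖ ≤ ρ)
    (l : ℝ) (m : ℕ) (Φ : E → ℝ) (hΦ : LipschitzWith 1 Φ) :
    ∑ ι : Fin m → α, exp (l * (Φ (∑ j, v (ι j))
        - (∑ κ : Fin m → α, Φ (∑ j, v (κ j))) / Fintype.card α ^ m))
      ≤ Fintype.card α ^ m * exp (m * ρ ^ 2 * l ^ 2 / 2) := by
  induction m generalizing Φ with
  | zero => simp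
  | succ m ih =>
    set K : ℝ := (Fintype.card α : ℝ)
    have hK : 0 < K := Nat.cast_pos.mpr Fintype.card_pos
    set Ψ : E → ℝ := fun y => (∑ a, Φ (y + v a)) / K
    set μ := (∑ κ : Fin m → α, Ψ (∑ j, v (κ j))) / K ^ m
    have hmean : (∑ κ : Fin (m + 1) → α, Φ (∑ j, v (κ j))) / K ^ (m + 1) = μ := by
      simp only [μ, Ψ, Fintype.sum_fin_succ_pi, Fin.sum_comp_cons, ← sum_div]
      rw [sum_comm, pow_succ', div_div]
      simp only [add_comm]
    have hstep (y : E) : ∑ a, exp (l * (Φ (y + v a) - Ψ y)) ≤ K * exp (ρ ^ 2 * l ^ 2 / 2) := by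
      have hrange (a : α) : Φ (y + v a) ∈ Set.Icc (Φ (y + w) - ρ) (Φ (y + w) + ρ) := by
        have hclose : |Φ (y + v a) - Φ (y + w)| ≤ ρ :=
          calc |Φ (y + v a) - Φ (y + w)| = dist (Φ (y + v a)) (Φ (y + w)) := (Real.dist_eq _ _).symm
            _ ≤ dist (y + v a) (y + w) := by simpa using hΦ.dist_le_mul (y + v a) (y + w)
            _ ≤ ρ := by rw [dist_add_left, dist_eq_norm]; exact hv a
        constructor <;> linarith [abs_le.mp hclose]
      convert sum_exp_mul_sub_average_le_of_mem_Icc (fun a => Φ (y + v a)) hrange l using 3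
      ring
    calc ∑ ι : Fin (m + 1) → α, exp (l * (Φ (∑ j, v (ι j))
            - (∑ κ : Fin (m + 1) → α, Φ (∑ j, v (κ j))) / K ^ (m + 1)))
        = ∑ ι : Fin m → α, exp (l * (Ψ (∑ j, v (ι j)) - μ))
            * ∑ a, exp (l * (Φ (∑ j, v (ι j) + v a) - Ψ (∑ j, v (ι j)))) := by
          rw [hmean, Fintype.sum_fin_succ_pi, sum_comm]
          refine sum_congr rfl fun ι _ => ?_
          rw [mul_sum]
          refine sum_congr rfl fun a _ => ?_
          rw [Fin.sum_comp_cons, ← exp_add, add_comm (v a)]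
          ring_nf
      _ ≤ ∑ ι : Fin m → α, exp (l * (Ψ (∑ j, v (ι j)) - μ)) * (K * exp (ρ ^ 2 * l ^ 2 / 2)) :=
          sum_le_sum fun ι _ => mul_le_mul_of_nonneg_left (hstep _) (exp_pos _).le
      _ ≤ K ^ m * exp (m * ρ ^ 2 * l ^ 2 / 2) * (K * exp (ρ ^ 2 * l ^ 2 / 2)) := by
          rw [← sum_mul]
          exact mul_le_mul_of_nonneg_right (ih Ψ (hΦ.average_comp_add Φ v)) (by positivity)
      _ = K ^ (m + 1) * exp ((m + 1 : ℕ) * ρ ^ 2 * l ^ 2 / 2) := by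
          rw [pow_succ, mul_mul_mul_comm, ← exp_add]
          push_cast
          ring_nf

variable [InnerProductSpace ℝ E]

theorem sum_norm_sum_comp_le (v : α → E) (hv0 : ∑ i, v i = 0) (w : E) {ρ : ℝ}
    (hv : ∀ i, ‖v i - w‖ ≤ ρ) (m : ℕ) :
    ∑ ι : Fin m → α, ‖∑ j, v (ι j)‖ ≤ Fintype.card α ^ m * (√m * ρ) := by
  set K : ℝ := (Fintype.card α : ℝ)
  have hK : 0 < K := Nat.cast_pos.mpr Fintype.card_pos
  have hρ : 0 ≤ ρ := (norm_nonneg _).trans (hv (Classical.arbitrary α))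
  have hvar : ∑ i, ‖v i‖ ^ 2 ≤ K * ρ ^ 2 := by
    have hsplit : ∑ i, ‖v i - w‖ ^ 2 = ∑ i, ‖v i‖ ^ 2 + K * ‖w‖ ^ 2 := by
      simp only [norm_sub_sq_real, sum_add_distrib, sum_sub_distrib, ← mul_sum, ← sum_inner, hv0,
        inner_zero_left, mul_zero, sub_zero, sum_const, card_univ, nsmul_eq_mul, K]
    calc ∑ i, ‖v i‖ ^ 2 ≤ ∑ i, ‖v i - w‖ ^ 2 := by rw [hsplit]; nlinarith [sq_nonneg ‖w‖]
      _ ≤ ∑ _i : α, ρ ^ 2 := sum_le_sum fun i _ => pow_le_pow_left₀ (norm_nonneg _) (hv i) 2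
      _ = K * ρ ^ 2 := by simp [K]
  have hsq : ∑ ι : Fin m → α, ‖∑ j, v (ι j)‖ ^ 2 ≤ K ^ m * (m * ρ ^ 2) := by
    refine le_of_mul_le_mul_left ?_ hK
    rw [card_mul_sum_sq_norm_sum_comp v hv0 m]
    calc (m : ℝ) * K ^ m * ∑ i, ‖v i‖ ^ 2 ≤ m * K ^ m * (K * ρ ^ 2) := by gcongr
      _ = K * (K ^ m * (m * ρ ^ 2)) := by ring
  have hcs := sq_sum_le_card_mul_sum_sq (s := univ) (f := fun ι : Fin m → α => ‖∑ j, v (ι j)‖)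
  rw [card_univ, Fintype.card_fun, Fintype.card_fin] at hcs
  refine (pow_le_pow_iff_left₀ (sum_nonneg fun _ _ => norm_nonneg _) (by positivity)
    two_ne_zero).mp ?_
  calc (∑ ι : Fin m → α, ‖∑ j, v (ι j)‖) ^ 2 ≤ K ^ m * (K ^ m * (m * ρ ^ 2)) := by
        push_cast at hcs; exact hcs.trans (by gcongr)
    _ = (K ^ m * (√m * ρ)) ^ 2 := by rw [mul_pow, mul_pow, sq_sqrt (Nat.cast_nonneg m)]; ring

theorem card_lt_norm_sum_comp_le (v : α → E) (hv0 : ∑ i, v i = 0) (w : E) {ρ t : ℝ}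
    (hv : ∀ i, ‖v i - w‖ ≤ ρ) (ht : 0 ≤ t) (m : ℕ) :
    (#{ι : Fin m → α | √m * ρ + t < ‖∑ j, v (ι j)‖} : ℝ)
      ≤ Fintype.card α ^ m * exp (-t ^ 2 / (2 * m * ρ ^ 2)) := by
  set K : ℝ := (Fintype.card α : ℝ)
  set l := t / (m * ρ ^ 2)
  set μ := (∑ κ : Fin m → α, ‖∑ j, v (κ j)‖) / K ^ m
  have hρ : 0 ≤ ρ := (norm_nonneg _).trans (hv (Classical.arbitrary α))
  have hμ : μ ≤ √m * ρ := div_le_of_le_mul₀ (by positivity) (by positivity)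
    (by linarith [sum_norm_sum_comp_le v hv0 w hv m])
  have hexponent : m * ρ ^ 2 * l ^ 2 / 2 - l * t = -t ^ 2 / (2 * m * ρ ^ 2) := by
    -- when `m ρ² = 0` both sides are `0`, because of division by zero
    rcases eq_or_ne ((m : ℝ) * ρ ^ 2) 0 with h | h
    · simp [l, h, mul_assoc]
    · simp only [l]; field_simp; ring
  set A : Finset (Fin m → α) := {ι | √m * ρ + t < ‖∑ j, v (ι j)‖}
  have hchernoff : (#A : ℝ) * exp (l * t) ≤ K ^ m * exp (m * ρ ^ 2 * l ^ 2 / 2) :=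
    calc (#A : ℝ) * exp (l * t) = ∑ ι ∈ A, exp (l * t) := by rw [sum_const, nsmul_eq_mul]
      _ ≤ ∑ ι ∈ A, exp (l * (‖∑ j, v (ι j)‖ - μ)) := by
          refine sum_le_sum fun ι hι => exp_le_exp.mpr ?_
          exact mul_le_mul_of_nonneg_left (by linarith [(mem_filter.mp hι).2]) (by positivity)
      _ ≤ ∑ ι : Fin m → α, exp (l * (‖∑ j, v (ι j)‖ - μ)) :=
          sum_le_sum_of_subset_of_nonneg (subset_univ A) fun _ _ _ => (exp_pos _).le
      _ ≤ K ^ m * exp (m * ρ ^ 2 * l ^ 2 / 2) :=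
          sum_exp_lipschitz_sub_average_le v w hv l m _ lipschitzWith_one_norm
  rw [← hexponent, exp_sub, mul_div_assoc', le_div_iff₀ (exp_pos _)]
  exact hchernoff

theorem le_sqrt_and_two_mul_sq_le_sqrt_sub_sq {n u a : ℝ} (ha : 0 ≤ a)
    (hn : 8 * u ^ 2 * (log 2 + a) ≤ n) : u ≤ √n ∧ 2 * a * u ^ 2 ≤ (√n - u) ^ 2 := by
  have hlog2 : 1 / 4 < log 2 := by linarith [log_two_gt_d9]
  have hsq : √n ^ 2 = n := sq_sqrt (le_trans (by positivity) hn)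
  refine ⟨le_sqrt_of_sq_le (by nlinarith), ?_⟩
  nlinarith [sq_nonneg (√n - 2 * u)]

theorem card_lt_norm_sample_mean_le (Δ : α → E) {ρ P ζ : ℝ} (hΔ : ∀ i, ‖Δ i‖ ≤ ρ) (hP : 0 < P)
    (hζ : 0 < ζ) (hζ1 : ζ ≤ 1) {n : ℕ} (hn : n ≠ 0) (hsize : 8 * (ρ / P) ^ 2 * log (2 / ζ) ≤ n) :
    (#{ι : Fin n → α |
        P < ‖(1 / n : ℝ) • ∑ j, (Δ (ι j) - (1 / Fintype.card α : ℝ) • ∑ i, Δ i)‖} : ℝ)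
      ≤ ζ * Fintype.card α ^ n := by
  set b := (1 / Fintype.card α : ℝ) • ∑ i, Δ i
  have hn0 : (0 : ℝ) < n := by positivity
  rcases (norm_nonneg _).trans (hΔ (Classical.arbitrary α)) |>.eq_or_lt with hρ | hρ
  · have hΔ0 : Δ = 0 := funext fun i => norm_le_zero_iff.mp (hρ ▸ hΔ i)
    simp only [b, hΔ0, Pi.zero_apply, sum_const_zero, smul_zero, sub_self, norm_zero, hP.not_gt,
      filter_false, card_empty, Nat.cast_zero]
    positivity
  have hv0 : ∑ i, (Δ i - b) = 0 := by
    have hK : (Fintype.card α : ℝ) ≠ 0 := Nat.cast_ne_zero.mpr Fintype.card_ne_zero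
    rw [sum_sub_distrib, sum_const, card_univ, ← Nat.cast_smul_eq_nsmul ℝ, smul_smul,
      mul_one_div_cancel hK, one_smul, sub_self]
  have hevent : ∀ ι : Fin n → α, P < ‖(1 / n : ℝ) • ∑ j, (Δ (ι j) - b)‖ ↔
      √n * ρ + (n * P - √n * ρ) < ‖∑ j, (Δ (ι j) - b)‖ := fun ι => by
    rw [norm_smul, norm_div, norm_one, Real.norm_natCast, one_div, ← div_eq_inv_mul,
      lt_div_iff₀ hn0, add_sub_cancel, mul_comm]
  set a := log ζ⁻¹
  have ha : 0 ≤ a := log_nonneg (one_le_inv_iff₀.mpr ⟨hζ, hζ1⟩)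
  obtain ⟨hu, hdev⟩ := le_sqrt_and_two_mul_sq_le_sqrt_sub_sq (n := n) (u := ρ / P) ha (by
    rwa [← log_mul two_ne_zero (inv_ne_zero hζ.ne'), ← div_eq_mul_inv])
  have ht : n * P - √n * ρ = √n * P * (√n - ρ / P) := by
    field_simp
    linear_combination (-P) * sq_sqrt hn0.le
  have ht0 : 0 ≤ n * P - √n * ρ := by
    rw [ht]; exact mul_nonneg (by positivity) (sub_nonneg.mpr hu)
  have htail := card_lt_norm_sum_comp_le (fun i => Δ i - b) hv0 (-b) (by simpa using hΔ) ht0 n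
  simp only [← hevent] at htail
  refine htail.trans ?_
  rw [mul_comm ζ]
  refine mul_le_mul_of_nonneg_left ?_ (by positivity)
  rw [← exp_log hζ, exp_le_exp, ht, neg_div, neg_le, ← log_inv, le_div_iff₀ (by positivity)]
  calc a * (2 * n * ρ ^ 2) = n * P ^ 2 * (2 * a * (ρ / P) ^ 2) := by field_simp
    _ ≤ n * P ^ 2 * (√n - ρ / P) ^ 2 := by gcongr
    _ = (√n * P * (√n - ρ / P)) ^ 2 := by rw [mul_pow, mul_pow, sq_sqrt hn0.le]

end Sampling

theorem gradient_const_mul_sum {F ι : Type*} [NormedAddCommGroup F] [InnerProductSpace ℝ F]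
    [CompleteSpace F] (s : Finset ι) (f : ι → F → ℝ) (c : ℝ) {y : F}
    (hf : ∀ i ∈ s, DifferentiableAt ℝ (f i) y) :
    gradient (fun z => c * ∑ i ∈ s, f i z) y = c • ∑ i ∈ s, gradient (f i) y := by
  rw [gradient, fderiv_const_mul (DifferentiableAt.fun_sum hf), fderiv_fun_sum hf, map_smul,
    map_sum]
  rfl

theorem one_div_smul_sum_sub {E : Type*} [AddCommGroup E] [Module ℝ E] {n : ℕ} (hn : n ≠ 0)
    (u : Fin n → E) (b : E) : (1 / n : ℝ) • ∑ j, (u j - b) = (1 / n : ℝ) • ∑ j, u j - b := by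
  rw [sum_sub_distrib, smul_sub, sum_const, card_univ, Fintype.card_fin,
    ← Nat.cast_smul_eq_nsmul ℝ, smul_smul, one_div_mul_cancel (Nat.cast_ne_zero.mpr hn), one_smul]

theorem variance_reduced_estimate_sub_gradient_eq {F : Type*} [NormedAddCommGroup F]
    [InnerProductSpace ℝ F] [CompleteSpace F] {N n : ℕ} (hn : n ≠ 0) (f : Fin N → F → ℝ)
    (hf : ∀ i, Differentiable ℝ (f i)) (x xt : F) (ι : Fin n → Fin N) :
    (1 / n : ℝ) • ∑ j, (gradient (f (ι j)) x - gradient (f (ι j)) xt)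
        + gradient (fun z => (1 / N : ℝ) * ∑ i, f i z) xt
        - gradient (fun z => (1 / N : ℝ) * ∑ i, f i z) x
      = (1 / n : ℝ) • ∑ j, ((gradient (f (ι j)) x - gradient (f (ι j)) xt)
          - (1 / Fintype.card (Fin N) : ℝ) • ∑ i, (gradient (f i) x - gradient (f i) xt)) := by
  have hgrad (y : F) :=
    gradient_const_mul_sum univ f (1 / N : ℝ) fun i _ => (hf i).differentiableAt (x := y)
  rw [one_div_smul_sum_sub hn, hgrad, hgrad, Fintype.card_fin]
  simp only [sum_sub_distrib, smul_sub]
  abel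

theorem eight_mul_sq_mul_log_le_of_le {u ζ n : ℝ} (d : ℕ) (hu : 0 ≤ u) (hζ : 0 < ζ)
    (hζ1 : ζ ≤ 1) (h : (8 * u ^ 2 + 4 / 3 * u) * log (2 * (d + 1) / ζ) ≤ n) :
    8 * u ^ 2 * log (2 / ζ) ≤ n := by
  have hlog0 : 0 ≤ log (2 / ζ) := log_nonneg ((one_le_div hζ).mpr (by linarith))
  have hlog : log (2 / ζ) ≤ log (2 * (d + 1) / ζ) :=
    log_le_log (by positivity) (by gcongr; linarith [d.cast_nonneg (α := ℝ)])
  refine le_trans ?_ h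
  gcongr
  exact le_add_of_nonneg_right (by positivity)

theorem one_sub_le_card_le_div {β : Type*} [Fintype β] [Nonempty β] (X : β → ℝ) {c ζ : ℝ}
    (h : (#{b | c < X b} : ℝ) ≤ ζ * Fintype.card β) :
    1 - ζ ≤ #{b | X b ≤ c} / Fintype.card β := by
  have hK : (0 : ℝ) < Fintype.card β := Nat.cast_pos.mpr Fintype.card_pos
  have hsplit := card_filter_add_card_filter_not (s := univ) (fun b => X b ≤ c)
  simp only [not_le, card_univ] at hsplit
  rw [le_div_iff₀ hK]
  have : (#{b | X b ≤ c} : ℝ) + #{b | c < X b} = Fintype.card β := by exact_mod_cast hsplit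
  linarith

/-- Theorem 2, gradient part: for sampling with replacement (a uniformly
random tuple of indices `ι : Fin n → Fin N`), if the batch size `n` satisfies the stated
lower bound, then with probability at least `1 − ζ` the variance-reduced gradient estimate
`g = (1/n)∑ⱼ(∇f_{ι j}(x) − ∇f_{ι j}(xt)) + ∇F(xt)` satisfies
`‖g − ∇F(x)‖ ≤ β·max{‖s‖², ε₁²}`. Probability is the normalized count over all tuples. -/
theorem stmt16 (d N n : ℕ) (hN : 0 < N) (hn : 0 < n)
    (f : Fin N → EuclideanSpace ℝ (Fin d) → ℝ) (L₁ : ℝ)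
    (hf : ∀ i, ContDiff ℝ 1 (f i))
    (hLip : ∀ i, ∀ x y : EuclideanSpace ℝ (Fin d),
      ‖gradient (f i) x - gradient (f i) y‖ ≤ L₁ * ‖x - y‖)
    (x xt s : EuclideanSpace ℝ (Fin d)) (ε₁ β ζ : ℝ)
    (hε₁ : 0 < ε₁) (hβ : 0 < β) (hζ : 0 < ζ) (hζ1 : ζ < 1)
    (hsize : (8 * L₁ ^ 2 / (β ^ 2 * max (‖s‖ ^ 4) (ε₁ ^ 4)) * ‖x - xt‖ ^ 2
        + 4 * L₁ / (3 * β * max (‖s‖ ^ 2) (ε₁ ^ 2)) * ‖x - xt‖)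
        * Real.log (2 * (d + 1) / ζ) ≤ (n : ℝ)) :
    1 - ζ ≤ ((Finset.univ.filter fun ι : Fin n → Fin N =>
        ‖(1 / n : ℝ) • ∑ j : Fin n, (gradient (f (ι j)) x - gradient (f (ι j)) xt)
            + gradient (fun z => (1 / N : ℝ) * ∑ i : Fin N, f i z) xt
            - gradient (fun z => (1 / N : ℝ) * ∑ i : Fin N, f i z) x‖
          ≤ β * max (‖s‖ ^ 2) (ε₁ ^ 2)).card : ℝ)
      / (Fintype.card (Fin n → Fin N) : ℝ) := by
  have : Nonempty (Fin N) := ⟨⟨0, hN⟩⟩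
  set M := max (‖s‖ ^ 2) (ε₁ ^ 2)
  have hM : 0 < M := lt_max_of_lt_right (by positivity)
  have hρ : 0 ≤ L₁ * ‖x - xt‖ := (norm_nonneg _).trans (hLip ⟨0, hN⟩ x xt)
  have hsample : 8 * (L₁ * ‖x - xt‖ / (β * M)) ^ 2 * log (2 / ζ) ≤ n := by
    have hM4 : max (‖s‖ ^ 4) (ε₁ ^ 4) = M ^ 2 := by
      rw [pow_left_monotoneOn.map_max (Set.mem_Ici.mpr (by positivity))
        (Set.mem_Ici.mpr (by positivity))]
      ring_nf
    refine eight_mul_sq_mul_log_le_of_le d (div_nonneg hρ (by positivity)) hζ hζ1.le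
      (le_of_eq_of_le ?_ hsize)
    rw [hM4]
    field_simp
  simp only [variance_reduced_estimate_sub_gradient_eq hn.ne' f
    fun i => (hf i).differentiable one_ne_zero]
  refine one_sub_le_card_le_div _ ?_
  simpa [Fintype.card_fun] using card_lt_norm_sample_mean_le _ (fun i => hLip i x xt)
    (by positivity : 0 < β * M) hζ hζ1.le hn.ne' hsample
end

section
/- Let (x_i)_{i=0}^{k} be any sequence in ℝ^d, and let m ≥ 1 be an integer dividing k with k ≥ 1. Define C' := ∑_{i=1}^{k} ‖x_i − x_{i−1}‖³. Then ∑_{i=0}^{k/m − 1} ∑_{j=1}^{m−1} ‖x_{i·m + j} − x_{i·m}‖² ≤ m²·k^{1/3}·(C')^{2/3}, and ∑_{i=0}^{k/m − 1} ∑_{j=1}^{m−1} ‖x_{i·m + j} − x_{i·m}‖ ≤ m·k^{2/3}·(C')^{1/3}. -/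
open Finset

lemma holder1 {s : Finset ℕ} {f : ℕ → ℝ} (hf : ∀ i ∈ s, 0 ≤ f i) :
    ∑ i ∈ s, f i ≤ (s.card : ℝ) ^ ((2:ℝ)/3) * (∑ i ∈ s, f i ^ 3) ^ ((1:ℝ)/3) := by
  have hpq : Real.HolderConjugate 3 (3/2) := Real.holderConjugate_iff.mpr ⟨by norm_num, by norm_num⟩
  have h := Real.inner_le_Lp_mul_Lq_of_nonneg (f := f) (g := fun _ => (1:ℝ)) (s := s) hpq hf (by intro i _; norm_num)
  simp only [mul_one] at h
  calc ∑ i ∈ s, f i ≤ (∑ i ∈ s, f i ^ (3:ℝ)) ^ ((1:ℝ)/3) * (∑ i ∈ s, (1:ℝ) ^ ((3:ℝ)/2)) ^ ((1:ℝ)/(3/2)) := by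
        convert h using 3 <;> norm_num
    _ = (s.card : ℝ) ^ ((2:ℝ)/3) * (∑ i ∈ s, f i ^ 3) ^ ((1:ℝ)/3) := by
        rw [mul_comm]
        congr 1
        · simp
        · congr 1
          refine Finset.sum_congr rfl fun i hi => ?_
          rw [← Real.rpow_natCast (f i) 3]
          norm_num

lemma holder2 {s : Finset ℕ} {f : ℕ → ℝ} (hf : ∀ i ∈ s, 0 ≤ f i) :
    ∑ i ∈ s, f i ^ 2 ≤ (s.card : ℝ) ^ ((1:ℝ)/3) * (∑ i ∈ s, f i ^ 3) ^ ((2:ℝ)/3) := by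
  have hpq : Real.HolderConjugate (3/2) 3 := Real.holderConjugate_iff.mpr ⟨by norm_num, by norm_num⟩
  have h := Real.inner_le_Lp_mul_Lq_of_nonneg (f := fun i => f i ^ 2) (g := fun _ => (1:ℝ)) (s := s) hpq
    (fun i _ => sq_nonneg _) (by intro i _; norm_num)
  simp only [mul_one] at h
  calc ∑ i ∈ s, f i ^ 2
      ≤ (∑ i ∈ s, (f i ^ 2) ^ ((3:ℝ)/2)) ^ ((1:ℝ)/(3/2)) * (∑ i ∈ s, (1:ℝ) ^ (3:ℝ)) ^ ((1:ℝ)/3) := h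
    _ = (s.card : ℝ) ^ ((1:ℝ)/3) * (∑ i ∈ s, f i ^ 3) ^ ((2:ℝ)/3) := by
        rw [mul_comm]
        congr 1
        · simp
        · have : ∀ i ∈ s, (f i ^ 2) ^ ((3:ℝ)/2) = f i ^ 3 := by
            intro i hi
            rw [← Real.rpow_natCast (f i) 2, ← Real.rpow_natCast (f i) 3,
              ← Real.rpow_mul (hf i hi)]
            norm_num
          rw [Finset.sum_congr rfl this]
          norm_num

lemma partition (g : ℕ → ℝ) (m : ℕ) : ∀ n : ℕ,
    ∑ i ∈ range n, ∑ t ∈ Ioc (i*m) (i*m+m), g t = ∑ t ∈ Ioc 0 (n*m), g t := by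
  intro n
  induction n with
  | zero => simp
  | succ n ih =>
    rw [Finset.sum_range_succ, ih]
    have hd : Disjoint (Ioc 0 (n*m)) (Ioc (n*m) (n*m+m)) := by
      rw [Finset.disjoint_left]
      intro a ha hb
      simp only [Finset.mem_Ioc] at ha hb
      omega
    rw [← Finset.sum_union hd, Finset.Ioc_union_Ioc_eq_Ioc (Nat.zero_le _) (Nat.le_add_right _ _)]
    congr 1
    ring_nf

/-- epoch-wise drift bounds. For any sequence `(xᵢ)` in `ℝ^d`, `m ≥ 1`
dividing `k ≥ 1`, with `C' = ∑_{i=1}^{k} ‖xᵢ − x_{i−1}‖³`, one has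
`∑_{i=0}^{k/m−1} ∑_{j=1}^{m−1} ‖x_{im+j} − x_{im}‖² ≤ m²·k^{1/3}·C'^{2/3}` and
`∑_{i=0}^{k/m−1} ∑_{j=1}^{m−1} ‖x_{im+j} − x_{im}‖ ≤ m·k^{2/3}·C'^{1/3}`. -/
theorem stmt19 (d m k : ℕ) (hm : 1 ≤ m) (hk : 1 ≤ k) (hdvd : m ∣ k)
    (x : ℕ → EuclideanSpace ℝ (Fin d)) :
    (∑ i ∈ Finset.range (k / m), ∑ j ∈ Finset.Icc 1 (m - 1),
        ‖x (i * m + j) - x (i * m)‖ ^ 2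
      ≤ (m : ℝ) ^ 2 * (k : ℝ) ^ ((1 : ℝ) / 3)
        * (∑ i ∈ Finset.Icc 1 k, ‖x i - x (i - 1)‖ ^ 3) ^ ((2 : ℝ) / 3)) ∧
    (∑ i ∈ Finset.range (k / m), ∑ j ∈ Finset.Icc 1 (m - 1),
        ‖x (i * m + j) - x (i * m)‖
      ≤ (m : ℝ) * (k : ℝ) ^ ((2 : ℝ) / 3)
        * (∑ i ∈ Finset.Icc 1 k, ‖x i - x (i - 1)‖ ^ 3) ^ ((1 : ℝ) / 3)) := by
  set s : ℕ → ℝ := fun t => ‖x t - x (t-1)‖ with hs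
  have hs0 : ∀ t, 0 ≤ s t := fun t => norm_nonneg _
  set S : ℕ → ℝ := fun i => ∑ t ∈ Ioc (i*m) (i*m+m), s t with hS
  have hS0 : ∀ i, 0 ≤ S i := fun i => Finset.sum_nonneg fun t _ => hs0 t
  have hIcc : Finset.Icc 1 k = Finset.Ioc 0 k := by rw [← Finset.Icc_add_one_left_eq_Ioc]; rfl
  have hnm : (k/m) * m = k := Nat.div_mul_cancel hdvd
  -- key per-term bound
  have key : ∀ i, ∀ j ∈ Finset.Icc 1 (m-1), ‖x (i*m + j) - x (i*m)‖ ≤ S i := by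
    intro i j hj
    simp only [Finset.mem_Icc] at hj
    have h1 : ‖x (i*m + j) - x (i*m)‖ ≤ ∑ t ∈ Ioc (i*m) (i*m + j), s t := by
      have := dist_le_range_sum_dist (fun r => x (i*m + r)) j
      rw [dist_comm] at this
      rw [← dist_eq_norm]
      refine this.trans_eq ?_
      rw [show Ioc (i*m) (i*m + j) = Ico (i*m+1) (i*m+j+1) by
        rw [Finset.Ico_add_one_right_eq_Icc, Finset.Icc_add_one_left_eq_Ioc]]
      rw [Finset.sum_Ico_eq_sum_range]
      simp only [show i*m+j+1 - (i*m+1) = j by omega]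
      refine Finset.sum_congr rfl fun r _ => ?_
      have e1 : i*m + (r+1) = i*m+1+r := by omega
      have e2 : i*m + r = i*m+1+r-1 := by omega
      rw [dist_eq_norm, norm_sub_rev, e1, e2]
    refine h1.trans (Finset.sum_le_sum_of_subset_of_nonneg ?_ fun t _ _ => hs0 t)
    exact Finset.Ioc_subset_Ioc le_rfl (Nat.add_le_add_left (hj.2.trans (Nat.sub_le m 1)) _)
  have cardm : (Finset.Icc 1 (m-1)).card = m - 1 := by
    rw [Nat.card_Icc]; omega
  -- partition identities
  have part1 : ∑ i ∈ range (k/m), ∑ t ∈ Ioc (i*m) (i*m+m), s t = ∑ t ∈ Ioc 0 k, s t := by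
    rw [partition s m (k/m), hnm]
  have part2 : ∑ i ∈ range (k/m), ∑ t ∈ Ioc (i*m) (i*m+m), s t ^ 2 = ∑ t ∈ Ioc 0 k, s t ^ 2 := by
    rw [partition (fun t => s t ^ 2) m (k/m), hnm]
  have cardIoc : (Finset.Ioc 0 k).card = k := by simp
  have hC0 : 0 ≤ ∑ i ∈ Finset.Icc 1 k, ‖x i - x (i - 1)‖ ^ 3 :=
    Finset.sum_nonneg fun i _ => by positivity
  constructor
  · -- squared bound
    have step1 : ∑ i ∈ Finset.range (k / m), ∑ j ∈ Finset.Icc 1 (m - 1),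
        ‖x (i * m + j) - x (i * m)‖ ^ 2 ≤ (m:ℝ)^2 * ∑ t ∈ Ioc 0 k, s t ^ 2 := by
      have h1 : ∀ i ∈ range (k/m), ∑ j ∈ Finset.Icc 1 (m - 1),
          ‖x (i * m + j) - x (i * m)‖ ^ 2 ≤ ((m:ℝ)-1) * S i ^ 2 := by
        intro i _
        calc ∑ j ∈ Finset.Icc 1 (m - 1), ‖x (i * m + j) - x (i * m)‖ ^ 2
            ≤ ∑ j ∈ Finset.Icc 1 (m - 1), S i ^ 2 := by
              refine Finset.sum_le_sum fun j hj => ?_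
              exact pow_le_pow_left₀ (norm_nonneg _) (key i j hj) 2
          _ = ((m:ℝ)-1) * S i ^ 2 := by
              rw [Finset.sum_const, cardm, nsmul_eq_mul]
              congr 1
              have : (1:ℕ) ≤ m := hm
              push_cast [Nat.cast_sub hm]
              ring
      have h2 : ∀ i, S i ^ 2 ≤ (m:ℝ) * ∑ t ∈ Ioc (i*m) (i*m+m), s t ^ 2 := by
        intro i
        have := sq_sum_le_card_mul_sum_sq (s := Ioc (i*m) (i*m+m)) (f := s)
        have hcard : (Ioc (i*m) (i*m+m)).card = m := by simp
        calc S i ^ 2 ≤ ((Ioc (i*m) (i*m+m)).card : ℝ) * ∑ t ∈ Ioc (i*m) (i*m+m), s t ^ 2 := by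
              exact_mod_cast this
          _ = (m:ℝ) * ∑ t ∈ Ioc (i*m) (i*m+m), s t ^ 2 := by rw [hcard]
      calc ∑ i ∈ Finset.range (k / m), ∑ j ∈ Finset.Icc 1 (m - 1),
            ‖x (i * m + j) - x (i * m)‖ ^ 2
          ≤ ∑ i ∈ range (k/m), ((m:ℝ)-1) * S i ^ 2 := Finset.sum_le_sum h1
        _ ≤ ∑ i ∈ range (k/m), (m:ℝ) * ((m:ℝ) * ∑ t ∈ Ioc (i*m) (i*m+m), s t ^ 2) := by
            refine Finset.sum_le_sum fun i _ => ?_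
            have hm1 : ((m:ℝ)-1) ≤ (m:ℝ) := by linarith
            have := mul_le_mul_of_nonneg_left (h2 i) (by positivity : (0:ℝ) ≤ (m:ℝ))
            refine le_trans ?_ this
            exact mul_le_mul_of_nonneg_right hm1 (sq_nonneg _)
        _ = (m:ℝ)^2 * ∑ t ∈ Ioc 0 k, s t ^ 2 := by
            rw [← part2, Finset.mul_sum]
            refine Finset.sum_congr rfl fun i _ => by ring
    refine step1.trans ?_
    rw [mul_assoc]
    refine mul_le_mul_of_nonneg_left ?_ (by positivity)
    have := holder2 (s := Ioc 0 k) (f := s) (fun t _ => hs0 t)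
    rw [cardIoc] at this
    rw [hIcc]
    exact this
  · -- linear bound
    have step1 : ∑ i ∈ Finset.range (k / m), ∑ j ∈ Finset.Icc 1 (m - 1),
        ‖x (i * m + j) - x (i * m)‖ ≤ (m:ℝ) * ∑ t ∈ Ioc 0 k, s t := by
      calc ∑ i ∈ Finset.range (k / m), ∑ j ∈ Finset.Icc 1 (m - 1), ‖x (i * m + j) - x (i * m)‖
          ≤ ∑ i ∈ range (k/m), ((m:ℝ)-1) * S i := by
            refine Finset.sum_le_sum fun i _ => ?_
            calc ∑ j ∈ Finset.Icc 1 (m - 1), ‖x (i * m + j) - x (i * m)‖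
                ≤ ∑ j ∈ Finset.Icc 1 (m - 1), S i := Finset.sum_le_sum (key i)
              _ = ((m:ℝ)-1) * S i := by
                  rw [Finset.sum_const, cardm, nsmul_eq_mul]
                  congr 1
                  push_cast [Nat.cast_sub hm]
                  ring
        _ ≤ ∑ i ∈ range (k/m), (m:ℝ) * S i := by
            refine Finset.sum_le_sum fun i _ => ?_
            exact mul_le_mul_of_nonneg_right (by linarith [ (by norm_num : (0:ℝ) ≤ 1)] : ((m:ℝ)-1) ≤ (m:ℝ)) (hS0 i)
        _ = (m:ℝ) * ∑ t ∈ Ioc 0 k, s t := by rw [← Finset.mul_sum, part1]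
    refine step1.trans ?_
    rw [mul_assoc]
    refine mul_le_mul_of_nonneg_left ?_ (by positivity)
    have := holder1 (s := Ioc 0 k) (f := s) (fun t _ => hs0 t)
    rw [cardIoc] at this
    rw [hIcc]
    exact this
end
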